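/- arXiv:1402.2642 — 12 statements merged into one kernel-verified Lean document; each statement's English description precedes it below -/
import Mathlib

section
/- Assume m0, m1, m2 are not collinear and let x ∈ ℝ² with x ∉ {m0, m1, m2}. Then the TDOA map τ₂ is differentiable at x, and the rank of its derivative Dτ₂(x) : ℝ² → ℝ² equals 1 if there exist distinct indices j, k ∈ {0,1,2} such that x lies on the affine line through m_j and m_k but not in the closed segment joining m_j and m_k; otherwise the rank of Dτ₂(x) equals 2. -/
/-! Write `u i` for the unit vector from `m i` to `x`. The derivative of `τ₂` at `x` is
`v ↦ (⟪u 1 - u 0, v⟫, ⟪u 2 - u 0, v⟫)`, so by rank–nullity its rank is the dimension of the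
vector span of `u 0, u 1, u 2`. Two of these unit vectors coincide exactly when `x` lies on the
line through the corresponding microphones but outside the segment between them, and they cannot
all coincide, as the microphones would then lie on one line through `x`. Three distinct points of
the unit circle are affinely independent, giving rank 2; if exactly two of the `u i` coincide,
the rank is 1. -/

open scoped RealInnerProductSpace

noncomputable def tau2 (m0 m1 m2 : EuclideanSpace ℝ (Fin 2)) (x : EuclideanSpace ℝ (Fin 2)) :
    ℝ × ℝ :=
  (‖x - m1‖ - ‖x - m0‖, ‖x - m2‖ - ‖x - m0‖)

open Function Module Set

section AffineSpace

variable {k V P : Type*} [Field k] [AddCommGroup V] [Module k V] [AddTorsor V P]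

theorem vectorSpan_range_fin_three (u : Fin 3 → P) :
    vectorSpan k (range u) = Submodule.span k {u 1 -ᵥ u 0, u 2 -ᵥ u 0} := by
  rw [vectorSpan_range_eq_span_range_vsub_right k u 0,
    ← Submodule.span_insert_zero (s := ({u 1 -ᵥ u 0, u 2 -ᵥ u 0} : Set V))]
  congr 1
  ext v
  simp [Fin.exists_fin_succ, eq_comm]

theorem finrank_vectorSpan_range_fin_three_eq_one {u : Fin 3 → P} (hinj : ¬Injective u)
    (hu : ¬(range u).Subsingleton) :
    finrank k (vectorSpan k (range u)) = 1 := by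
  have hle : finrank k (vectorSpan k (range u)) ≤ 1 :=
    (finrank_vectorSpan_le_iff_not_affineIndependent k u (n := 1) rfl).2
      fun h => hinj h.injective
  have hne : finrank k (vectorSpan k (range u)) ≠ 0 := by
    rwa [Ne, Submodule.finrank_eq_zero, vectorSpan_eq_bot_iff_subsingleton]
  omega

variable [LinearOrder k] [IsStrictOrderedRing k]

theorem sameRay_vsub_left_iff_wbtw_or_wbtw {x p q : P} :
    SameRay k (p -ᵥ x) (q -ᵥ x) ↔ Wbtw k x p q ∨ Wbtw k x q p :=
  ⟨wbtw_total_of_sameRay_vsub_left,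
    fun h => h.elim Wbtw.sameRay_vsub_left fun h => h.sameRay_vsub_left.symm⟩

theorem wbtw_or_wbtw_iff_mem_affineSpan_pair_and_notMem_affineSegment {x p q : P}
    (hxp : x ≠ p) (hxq : x ≠ q) (hpq : p ≠ q) :
    Wbtw k x p q ∨ Wbtw k x q p ↔ x ∈ line[k, p, q] ∧ x ∉ affineSegment k p q := by
  constructor
  · rintro (h | h)
    · exact ⟨pair_comm p q ▸ h.left_mem_affineSpan_of_right_ne hpq.symm,
        fun hx => hxp ((wbtw_rotate_iff k p).1 ⟨hx, h.symm⟩).symm⟩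
    · exact ⟨h.left_mem_affineSpan_of_right_ne hpq,
        fun hx => hxq ((wbtw_rotate_iff k x).1 ⟨h, hx⟩)⟩
  · rintro ⟨hline, hseg⟩
    rcases (collinear_insert_of_mem_affineSpan_pair hline).wbtw_or_wbtw_or_wbtw with h | h | h
    · exact Or.inl h
    · exact Or.inr h.symm
    · exact absurd (affineSegment_comm k p q ▸ h) hseg

end AffineSpace

section NormedSpace

variable {V : Type*} [NormedAddCommGroup V] [NormedSpace ℝ V]

theorem normalize_sub_eq_normalize_sub_iff {x p q : V} (hxp : x ≠ p) (hxq : x ≠ q)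
    (hpq : p ≠ q) :
    NormedSpace.normalize (x - p) = NormedSpace.normalize (x - q) ↔
      x ∈ line[ℝ, p, q] ∧ x ∉ segment ℝ p q := by
  rw [NormedSpace.normalize, NormedSpace.normalize,
    ← sameRay_iff_inv_norm_smul_eq_of_ne (sub_ne_zero.2 hxp) (sub_ne_zero.2 hxq),
    ← sameRay_neg_iff, neg_sub, neg_sub, ← vsub_eq_sub, ← vsub_eq_sub,
    sameRay_vsub_left_iff_wbtw_or_wbtw,
    wbtw_or_wbtw_iff_mem_affineSpan_pair_and_notMem_affineSegment hxp hxq hpq,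
    affineSegment_eq_segment]

theorem collinear_of_normalize_sub_eq {s : Set V} {x u : V}
    (h : ∀ m ∈ s, NormedSpace.normalize (x - m) = u) : Collinear ℝ s := by
  refine (collinear_iff_exists_forall_eq_smul_vadd s).2 ⟨x, u, fun m hm => ⟨-‖x - m‖, ?_⟩⟩
  rw [← h m hm, neg_smul, NormedSpace.norm_smul_normalize, vadd_eq_add]
  abel

theorem exists_mem_affineSpan_pair_notMem_segment_iff_not_injective {ι : Type*} {m : ι → V}
    {x : V} (hm : Injective m) (hxm : ∀ i, x ≠ m i) :
    (∃ j k, j ≠ k ∧ x ∈ line[ℝ, m j, m k] ∧ x ∉ segment ℝ (m j) (m k)) ↔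
      ¬Injective fun i => NormedSpace.normalize (x - m i) := by
  rw [not_injective_iff]
  refine exists₂_congr fun j k => ?_
  by_cases hjk : j = k
  · simp [hjk]
  · rw [normalize_sub_eq_normalize_sub_iff (hxm j) (hxm k) (hm.ne hjk)]
    tauto

end NormedSpace

section InnerProductSpace

variable {F : Type*} [NormedAddCommGroup F] [InnerProductSpace ℝ F]

theorem hasFDerivAt_norm {x : F} (hx : x ≠ 0) :
    HasFDerivAt (‖·‖) (innerSL ℝ (NormedSpace.normalize x)) x := by
  have h := (hasFDerivAt_id x).norm_sq.sqrt (pow_ne_zero 2 (norm_ne_zero_iff.2 hx))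
  simp only [id, Real.sqrt_sq (norm_nonneg _)] at h
  refine h.congr_fderiv (ContinuousLinearMap.ext fun v => ?_)
  simp only [ContinuousLinearMap.comp_id, smul_apply, coe_innerSL_apply,
    nsmul_eq_mul, Nat.cast_ofNat, smul_eq_mul, NormedSpace.normalize, map_smul]
  field_simp

theorem hasFDerivAt_norm_sub {x m : F} (hxm : x ≠ m) :
    HasFDerivAt (‖· - m‖) (innerSL ℝ (NormedSpace.normalize (x - m))) x :=
  ((hasFDerivAt_norm (sub_ne_zero.2 hxm)).comp x ((hasFDerivAt_id x).sub_const m) :)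

theorem ker_innerSL_prod_innerSL (a b : F) :
    LinearMap.ker (((innerSL ℝ a).prod (innerSL ℝ b) : F →L[ℝ] ℝ × ℝ) : F →ₗ[ℝ] ℝ × ℝ) =
      (Submodule.span ℝ {a, b})ᗮ := by
  rw [ContinuousLinearMap.coe_prod, LinearMap.ker_prod, Submodule.span_insert,
    ← Submodule.inf_orthogonal]
  congr 1 <;> ext v <;> simp [Submodule.mem_orthogonal_singleton_iff_inner_right]

theorem rank_innerSL_prod_innerSL [FiniteDimensional ℝ F] (a b : F) :
    LinearMap.rank (((innerSL ℝ a).prod (innerSL ℝ b) : F →L[ℝ] ℝ × ℝ) : F →ₗ[ℝ] ℝ × ℝ) =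
      finrank ℝ (Submodule.span ℝ {a, b}) := by
  rw [LinearMap.rank, ← finrank_eq_rank, Nat.cast_inj]
  have hker := LinearMap.finrank_range_add_finrank_ker
    (((innerSL ℝ a).prod (innerSL ℝ b) : F →L[ℝ] ℝ × ℝ) : F →ₗ[ℝ] ℝ × ℝ)
  have horth := (Submodule.span ℝ {a, b}).finrank_add_finrank_orthogonal
  rw [ker_innerSL_prod_innerSL] at hker
  omega

theorem finrank_vectorSpan_range_of_injective_of_norm_eq_one [FiniteDimensional ℝ F]
    {u : Fin 3 → F} (hu : ∀ i, ‖u i‖ = 1) (hinj : Injective u) :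
    finrank ℝ (vectorSpan ℝ (range u)) = 2 :=
  ((EuclideanGeometry.Sphere.mk (0 : F) 1).cospherical.affineIndependent
    (by simpa [range_subset_iff] using hu) hinj).finrank_vectorSpan (by simp)

end InnerProductSpace

theorem hasFDerivAt_tau2 {m0 m1 m2 x : EuclideanSpace ℝ (Fin 2)} (h0 : x ≠ m0) (h1 : x ≠ m1)
    (h2 : x ≠ m2) :
    HasFDerivAt (tau2 m0 m1 m2)
      ((innerSL ℝ (NormedSpace.normalize (x - m1) - NormedSpace.normalize (x - m0))).prod
        (innerSL ℝ (NormedSpace.normalize (x - m2) - NormedSpace.normalize (x - m0)))) x := by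
  rw [map_sub, map_sub]
  exact ((hasFDerivAt_norm_sub h1).sub (hasFDerivAt_norm_sub h0)).prodMk
    ((hasFDerivAt_norm_sub h2).sub (hasFDerivAt_norm_sub h0))

theorem stmt0 (m0 m1 m2 : EuclideanSpace ℝ (Fin 2))
    (hnc : ¬ Collinear ℝ ({m0, m1, m2} : Set (EuclideanSpace ℝ (Fin 2))))
    (x : EuclideanSpace ℝ (Fin 2))
    (hx : x ∉ ({m0, m1, m2} : Set (EuclideanSpace ℝ (Fin 2)))) :
    DifferentiableAt ℝ (tau2 m0 m1 m2) x ∧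
    ((∃ j k : Fin 3, j ≠ k ∧
        x ∈ affineSpan ℝ ({![m0, m1, m2] j, ![m0, m1, m2] k} : Set (EuclideanSpace ℝ (Fin 2))) ∧
        x ∉ segment ℝ (![m0, m1, m2] j) (![m0, m1, m2] k)) →
      LinearMap.rank
        ((fderiv ℝ (tau2 m0 m1 m2) x : EuclideanSpace ℝ (Fin 2) →L[ℝ] ℝ × ℝ) :
          EuclideanSpace ℝ (Fin 2) →ₗ[ℝ] ℝ × ℝ) = 1) ∧
    (¬ (∃ j k : Fin 3, j ≠ k ∧
        x ∈ affineSpan ℝ ({![m0, m1, m2] j, ![m0, m1, m2] k} : Set (EuclideanSpace ℝ (Fin 2))) ∧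
        x ∉ segment ℝ (![m0, m1, m2] j) (![m0, m1, m2] k)) →
      LinearMap.rank
        ((fderiv ℝ (tau2 m0 m1 m2) x : EuclideanSpace ℝ (Fin 2) →L[ℝ] ℝ × ℝ) :
          EuclideanSpace ℝ (Fin 2) →ₗ[ℝ] ℝ × ℝ) = 2) := by
  set m : Fin 3 → EuclideanSpace ℝ (Fin 2) := ![m0, m1, m2]
  have hm : AffineIndependent ℝ m := affineIndependent_iff_not_collinear_set.2 hnc
  have hxm (i : Fin 3) : x ≠ m i := by
    rintro rfl
    fin_cases i <;> simp [m] at hx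
  set u : Fin 3 → EuclideanSpace ℝ (Fin 2) := fun i => NormedSpace.normalize (x - m i)
  have hder : HasFDerivAt (tau2 m0 m1 m2) _ x := hasFDerivAt_tau2 (hxm 0) (hxm 1) (hxm 2)
  have hrank : LinearMap.rank ((fderiv ℝ (tau2 m0 m1 m2) x :
      EuclideanSpace ℝ (Fin 2) →L[ℝ] ℝ × ℝ) : EuclideanSpace ℝ (Fin 2) →ₗ[ℝ] ℝ × ℝ) =
      finrank ℝ (vectorSpan ℝ (range u)) := by
    rw [hder.fderiv, rank_innerSL_prod_innerSL, vectorSpan_range_fin_three]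
    rfl
  have hcoinc := exists_mem_affineSpan_pair_notMem_segment_iff_not_injective hm.injective hxm
  have hu : ¬(range u).Subsingleton := fun h =>
    affineIndependent_iff_not_collinear.1 hm <| collinear_of_normalize_sub_eq (u := u 0) <| by
      rintro _ ⟨i, rfl⟩
      exact h (mem_range_self i) (mem_range_self 0)
  refine ⟨hder.differentiableAt, fun h => ?_, fun h => ?_⟩
  · rw [hrank, finrank_vectorSpan_range_fin_three_eq_one (hcoinc.1 h) hu]
    rfl
  · rw [hrank, finrank_vectorSpan_range_of_injective_of_norm_eq_one
      (fun i => NormedSpace.norm_normalize_eq_one_iff.2 (sub_ne_zero.2 (hxm i)))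
      (not_not.1 (hcoinc.not.1 h))]
    rfl
end

section
/- Let i ∈ {1,2} with m_i ≠ m0, set d_{i0} = ‖m_i − m0‖, and let t_i ∈ ℝ satisfy |t_i| ≤ d_{i0}. Define the negative half-cones C₀⁻ = {(x, s) ∈ ℝ² × ℝ : ‖x − m0‖² = s², s ≤ 0} and C_i(t_i)⁻ = {(x, s) ∈ ℝ² × ℝ : ‖x − m_i‖² = (s − t_i)², s ≤ t_i}. Then the image of C₀⁻ ∩ C_i(t_i)⁻ under the projection π(x, s) = x equals A_i(t_i) = {x ∈ ℝ² : ‖x − m_i‖ − ‖x − m0‖ = t_i}. -/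
theorem stmt3 (m0 mi : EuclideanSpace ℝ (Fin 2)) (hne : mi ≠ m0)
    (ti : ℝ) (hti : |ti| ≤ ‖mi - m0‖) :
    (fun X : EuclideanSpace ℝ (Fin 2) × ℝ => X.1) ''
      ({X : EuclideanSpace ℝ (Fin 2) × ℝ | ‖X.1 - m0‖ ^ 2 = X.2 ^ 2 ∧ X.2 ≤ 0} ∩
       {X : EuclideanSpace ℝ (Fin 2) × ℝ | ‖X.1 - mi‖ ^ 2 = (X.2 - ti) ^ 2 ∧ X.2 ≤ ti}) =
    {x : EuclideanSpace ℝ (Fin 2) | ‖x - mi‖ - ‖x - m0‖ = ti} := by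
  ext x
  simp only [Set.mem_image, Set.mem_inter_iff, Set.mem_setOf_eq, Prod.exists]
  constructor
  · rintro ⟨a, s, ⟨⟨h0, hs0⟩, hi, hsi⟩, rfl⟩
    have e0 : ‖a - m0‖ = -s := by
      have := sq_abs s
      nlinarith [norm_nonneg (a - m0), abs_nonneg s]
    have ei : ‖a - mi‖ = ti - s := by
      nlinarith [norm_nonneg (a - mi)]
    rw [e0, ei]; ring
  · intro h
    refine ⟨x, -‖x - m0‖, ⟨⟨by ring, neg_nonpos.mpr (norm_nonneg _)⟩, ?_, ?_⟩, rfl⟩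
    · have : ‖x - mi‖ = ti + ‖x - m0‖ := by linarith
      rw [this]; ring
    · nlinarith [norm_nonneg (x - mi), norm_nonneg (x - m0)]
end

section
/- Let i ∈ {1,2} with m_i ≠ m0 and d_{i0} = ‖m_i − m0‖. Define C₀⁻ = {(x, s) ∈ ℝ² × ℝ : ‖x − m0‖² = s², s ≤ 0} and, for t_i ∈ ℝ, the plane Π_i(t_i) = {(x, s) ∈ ℝ² × ℝ : ⟨m_i − m0, x − m0⟩ − t_i·s = (d_{i0}² − t_i²)/2}, and let π(x, s) = x. Then: if −d_{i0} < t_i ≤ d_{i0}, π(C₀⁻ ∩ Π_i(t_i)) = A_i(t_i); and if t_i = −d_{i0}, π(C₀⁻ ∩ Π_i(t_i)) = A_i(−d_{i0}) ∪ [m0, m_i], where [m0, m_i] is the closed segment joining m0 and m_i. -/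
/-!
A point `(x, s)` of the lower cone has `s = -‖x - m₀‖`, and by the polarization identity the
plane equation then reads `(‖x - m₀‖ + t)² = ‖x - mᵢ‖²`. Taking square roots, the projection is
the branch `‖x - mᵢ‖ - ‖x - m₀‖ = t` together with the "ellipse" `‖x - m₀‖ + ‖x - mᵢ‖ = -t`.
By the triangle inequality the ellipse is empty when `t > -‖mᵢ - m₀‖` and degenerates to the
segment `[m₀, mᵢ]` when `t = -‖mᵢ - m₀‖`.
-/

variable {E : Type*} [NormedAddCommGroup E]

def lowerCone (c : E) : Set (E × ℝ) :=
  {X | ‖X.1 - c‖ ^ 2 = X.2 ^ 2 ∧ X.2 ≤ 0}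

lemma mem_lowerCone_iff (c : E) (X : E × ℝ) : X ∈ lowerCone c ↔ X.2 = -‖X.1 - c‖ := by
  have hnorm := norm_nonneg (X.1 - c)
  constructor
  · rintro ⟨hsq, hnonpos⟩
    rcases sq_eq_sq_iff_eq_or_eq_neg.mp hsq with h | h <;> linarith
  · intro h
    exact ⟨by rw [h, neg_sq], by linarith⟩

lemma setOf_norm_sub_add_norm_sub_eq_eq_empty {c m : E} {t : ℝ} (ht : -‖m - c‖ < t) :
    {x | ‖x - c‖ + ‖x - m‖ = -t} = ∅ :=
  Set.eq_empty_of_forall_notMem fun x hx ↦ by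
    have htriangle := norm_sub_le_norm_sub_add_norm_sub m x c
    rw [norm_sub_rev m x] at htriangle
    rw [Set.mem_ofPred] at hx
    linarith

section StrictConvex

variable [NormedSpace ℝ E] [StrictConvexSpace ℝ E]

lemma setOf_norm_sub_add_norm_sub_eq_norm_sub (c m : E) :
    {x | ‖x - c‖ + ‖x - m‖ = ‖m - c‖} = segment ℝ c m := by
  ext x
  rw [Set.mem_ofPred, mem_segment_iff_wbtw, ← dist_add_dist_eq_iff]
  simp only [dist_eq_norm, norm_sub_rev c x, norm_sub_rev c m]

end StrictConvex

variable [InnerProductSpace ℝ E]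

def rangePlane (c m : E) (t : ℝ) : Set (E × ℝ) :=
  {X | inner ℝ (m - c) (X.1 - c) - t * X.2 = (‖m - c‖ ^ 2 - t ^ 2) / 2}

lemma real_inner_sub_sub_eq (c m x : E) :
    inner ℝ (m - c) (x - c) = (‖x - c‖ ^ 2 + ‖m - c‖ ^ 2 - ‖x - m‖ ^ 2) / 2 := by
  rw [real_inner_eq_norm_mul_self_add_norm_mul_self_sub_norm_sub_mul_self_div_two,
    sub_sub_sub_cancel_right, norm_sub_rev m x]
  ring

lemma mem_rangePlane_iff_of_mem_lowerCone {c : E} {X : E × ℝ} (hX : X ∈ lowerCone c)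
    (m : E) (t : ℝ) :
    X ∈ rangePlane c m t ↔ (‖X.1 - c‖ + t) ^ 2 = ‖X.1 - m‖ ^ 2 := by
  rw [mem_lowerCone_iff] at hX
  show _ - t * X.2 = _ ↔ _
  rw [hX, real_inner_sub_sub_eq]
  constructor <;> intro h
  · linear_combination 2 * h
  · linear_combination h / 2

lemma mem_image_fst_lowerCone_inter_rangePlane_iff (c m : E) (t : ℝ) (x : E) :
    x ∈ Prod.fst '' (lowerCone c ∩ rangePlane c m t) ↔ (‖x - c‖ + t) ^ 2 = ‖x - m‖ ^ 2 := by
  constructor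
  · rintro ⟨X, ⟨hC, hP⟩, rfl⟩
    exact (mem_rangePlane_iff_of_mem_lowerCone hC m t).mp hP
  · intro h
    have hC : (x, -‖x - c‖) ∈ lowerCone c := (mem_lowerCone_iff c _).mpr rfl
    exact ⟨_, ⟨hC, (mem_rangePlane_iff_of_mem_lowerCone hC m t).mpr h⟩, rfl⟩

lemma image_fst_lowerCone_inter_rangePlane (c m : E) (t : ℝ) :
    Prod.fst '' (lowerCone c ∩ rangePlane c m t) =
      {x | ‖x - m‖ - ‖x - c‖ = t} ∪ {x | ‖x - c‖ + ‖x - m‖ = -t} := by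
  ext x
  rw [mem_image_fst_lowerCone_inter_rangePlane_iff, sq_eq_sq_iff_eq_or_eq_neg]
  simp only [Set.mem_union, Set.mem_ofPred]
  apply or_congr <;> constructor <;> intro h <;> linarith

theorem stmt4_general (m0 mi : EuclideanSpace ℝ (Fin 2)) (ti : ℝ)
    (C0neg : Set (EuclideanSpace ℝ (Fin 2) × ℝ))
    (hC0 : C0neg = {X : EuclideanSpace ℝ (Fin 2) × ℝ | ‖X.1 - m0‖ ^ 2 = X.2 ^ 2 ∧ X.2 ≤ 0})
    (Pi : Set (EuclideanSpace ℝ (Fin 2) × ℝ))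
    (hPi : Pi = {X : EuclideanSpace ℝ (Fin 2) × ℝ |
      (inner ℝ (mi - m0) (X.1 - m0) : ℝ) - ti * X.2 = (‖mi - m0‖ ^ 2 - ti ^ 2) / 2}) :
    (-‖mi - m0‖ < ti ∧ ti ≤ ‖mi - m0‖ →
      (fun X : EuclideanSpace ℝ (Fin 2) × ℝ => X.1) '' (C0neg ∩ Pi) =
        {x : EuclideanSpace ℝ (Fin 2) | ‖x - mi‖ - ‖x - m0‖ = ti}) ∧
    (ti = -‖mi - m0‖ →
      (fun X : EuclideanSpace ℝ (Fin 2) × ℝ => X.1) '' (C0neg ∩ Pi) =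
        {x : EuclideanSpace ℝ (Fin 2) | ‖x - mi‖ - ‖x - m0‖ = -‖mi - m0‖} ∪
          segment ℝ m0 mi) := by
  subst hC0 hPi
  have himage := image_fst_lowerCone_inter_rangePlane m0 mi ti
  refine ⟨fun ⟨hlower, _⟩ ↦ ?_, fun hti ↦ ?_⟩
  · rw [setOf_norm_sub_add_norm_sub_eq_eq_empty hlower, Set.union_empty] at himage
    exact himage
  · subst hti
    rw [neg_neg, setOf_norm_sub_add_norm_sub_eq_norm_sub] at himage
    exact himage

theorem stmt4 (m0 mi : EuclideanSpace ℝ (Fin 2)) (hne : mi ≠ m0) (ti : ℝ)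
    (C0neg : Set (EuclideanSpace ℝ (Fin 2) × ℝ))
    (hC0 : C0neg = {X : EuclideanSpace ℝ (Fin 2) × ℝ | ‖X.1 - m0‖ ^ 2 = X.2 ^ 2 ∧ X.2 ≤ 0})
    (Pi : Set (EuclideanSpace ℝ (Fin 2) × ℝ))
    (hPi : Pi = {X : EuclideanSpace ℝ (Fin 2) × ℝ |
      (inner ℝ (mi - m0) (X.1 - m0) : ℝ) - ti * X.2 = (‖mi - m0‖ ^ 2 - ti ^ 2) / 2}) :
    (-‖mi - m0‖ < ti ∧ ti ≤ ‖mi - m0‖ →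
      (fun X : EuclideanSpace ℝ (Fin 2) × ℝ => X.1) '' (C0neg ∩ Pi) =
        {x : EuclideanSpace ℝ (Fin 2) | ‖x - mi‖ - ‖x - m0‖ = ti}) ∧
    (ti = -‖mi - m0‖ →
      (fun X : EuclideanSpace ℝ (Fin 2) × ℝ => X.1) '' (C0neg ∩ Pi) =
        {x : EuclideanSpace ℝ (Fin 2) | ‖x - mi‖ - ‖x - m0‖ = -‖mi - m0‖} ∪
          segment ℝ m0 mi) :=
  stmt4_general m0 mi ti C0neg hC0 Pi hPi
end

section
/- Assume m0, m1, m2 are not collinear. Let x₀ ∈ ℝ² with x₀ ∉ {m0, m1, m2}, and suppose there is no pair of distinct indices j, k ∈ {0,1,2} such that x₀ lies on the affine line through m_j and m_k outside the closed segment joining m_j and m_k. Then there exists an open neighborhood W of τ₂(x₀) in ℝ² with W ⊆ τ₂(ℝ²); i.e., the image of the TDOA map is locally all of the τ-plane around τ₂(x₀). -/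
open Module RealInnerProductSpace

theorem HasStrictFDerivAt.range_mem_nhds {𝕜 E F : Type*} [NontriviallyNormedField 𝕜]
    [CompleteSpace 𝕜] [NormedAddCommGroup E] [NormedSpace 𝕜 E] [FiniteDimensional 𝕜 E]
    [NormedAddCommGroup F] [NormedSpace 𝕜 F] [FiniteDimensional 𝕜 F]
    {f : E → F} {f' : E →L[𝕜] F} {a : E} (hf : HasStrictFDerivAt f f' a)
    (hdim : finrank 𝕜 E = finrank 𝕜 F) (hf' : Function.Injective f') :
    Set.range f ∈ nhds (f a) := by
  have hsurj : LinearMap.range f' = ⊤ := LinearMap.range_eq_top.mpr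
    ((LinearMap.injective_iff_surjective_of_finrank_eq_finrank hdim).mp hf')
  have : CompleteSpace E := FiniteDimensional.complete 𝕜 E
  have : CompleteSpace F := FiniteDimensional.complete 𝕜 F
  rw [← hf.map_nhds_eq_of_surj hsurj, Filter.mem_map, Set.preimage_range]
  exact Filter.univ_mem

variable {E : Type*} [NormedAddCommGroup E] [InnerProductSpace ℝ E]

theorem hasStrictFDerivAt_norm {x : E} (hx : x ≠ 0) :
    HasStrictFDerivAt (‖·‖) (innerSL ℝ (NormedSpace.normalize x)) x := by
  have hsq := (hasStrictFDerivAt_norm_sq x).sqrt (pow_ne_zero 2 (norm_ne_zero_iff.mpr hx))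
  simp only [Real.sqrt_sq (norm_nonneg _)] at hsq
  refine hsq.congr_fderiv (ContinuousLinearMap.ext fun v => ?_)
  simp [NormedSpace.normalize]
  field_simp

theorem hasStrictFDerivAt_norm_sub {p x : E} (hx : x ≠ p) :
    HasStrictFDerivAt (‖· - p‖) (innerSL ℝ (NormedSpace.normalize (x - p))) x := by
  simpa using (hasStrictFDerivAt_norm (sub_ne_zero.mpr hx)).comp x
    ((hasStrictFDerivAt_id x).sub_const p)

theorem collinear_of_forall_inner_sub_eq_zero [FiniteDimensional ℝ E] (hE : finrank ℝ E = 2)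
    {s : Set E} {p₀ v : E} (hp₀ : p₀ ∈ s) (hv : v ≠ 0) (hs : ∀ p ∈ s, ⟪p - p₀, v⟫ = 0) :
    Collinear ℝ s := by
  have hle : vectorSpan ℝ s ≤ (ℝ ∙ v)ᗮ := by
    rw [vectorSpan_eq_span_vsub_set_right ℝ hp₀, Submodule.span_le]
    rintro _ ⟨p, hp, rfl⟩
    exact Submodule.mem_orthogonal_singleton_iff_inner_left.mpr (hs p hp)
  have hK : finrank ℝ (ℝ ∙ v)ᗮ = 1 := by
    have := Submodule.finrank_add_finrank_orthogonal (ℝ ∙ v)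
    rw [finrank_span_singleton hv, hE] at this
    omega
  rw [collinear_iff_finrank_le_one]
  exact hK ▸ Submodule.finrank_mono hle

theorem eq_or_eq_or_eq_of_collinear_of_norm_eq_one {u₀ u₁ u₂ : E}
    (hc : Collinear ℝ ({u₀, u₁, u₂} : Set E)) (h₀ : ‖u₀‖ = 1) (h₁ : ‖u₁‖ = 1) (h₂ : ‖u₂‖ = 1) :
    u₀ = u₁ ∨ u₀ = u₂ ∨ u₁ = u₂ := by
  by_contra! h
  have hs : EuclideanGeometry.Cospherical ({u₀, u₁, u₂} : Set E) :=
    ⟨0, 1, by simp [h₀, h₁, h₂]⟩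
  exact affineIndependent_iff_not_collinear_set.mp (hs.affineIndependent_of_ne h.1 h.2.1 h.2.2) hc

theorem innerSL_prod_innerSL_sub_injective [FiniteDimensional ℝ E] (hE : finrank ℝ E = 2)
    {u₀ u₁ u₂ : E} (h₀ : ‖u₀‖ = 1) (h₁ : ‖u₁‖ = 1) (h₂ : ‖u₂‖ = 1)
    (h₀₁ : u₀ ≠ u₁) (h₀₂ : u₀ ≠ u₂) (h₁₂ : u₁ ≠ u₂) :
    Function.Injective ((innerSL ℝ (u₁ - u₀)).prod (innerSL ℝ (u₂ - u₀))) := by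
  rw [injective_iff_map_eq_zero]
  intro v hv
  by_contra hv0
  simp only [ContinuousLinearMap.prod_apply, innerSL_apply_apply, Prod.mk_eq_zero] at hv
  have hc : Collinear ℝ ({u₀, u₁, u₂} : Set E) := by
    refine collinear_of_forall_inner_sub_eq_zero hE (Set.mem_insert _ _) hv0 ?_
    simp [hv.1, hv.2]
  rcases eq_or_eq_or_eq_of_collinear_of_norm_eq_one hc h₀ h₁ h₂ with h | h | h <;> contradiction

theorem mem_affineSpan_pair_and_notMem_segment_of_normalize_eq {F : Type*}
    [NormedAddCommGroup F] [NormedSpace ℝ F] {p q x : F} (hpq : p ≠ q) (hxp : x ≠ p) (hxq : x ≠ q)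
    (h : NormedSpace.normalize (x - p) = NormedSpace.normalize (x - q)) :
    x ∈ line[ℝ, p, q] ∧ x ∉ segment ℝ p q := by
  have hray : SameRay ℝ (p -ᵥ x) (q -ᵥ x) := by
    rw [vsub_eq_sub, vsub_eq_sub, ← sameRay_neg_iff, neg_sub, neg_sub]
    exact (sameRay_iff_inv_norm_smul_eq_of_ne (sub_ne_zero.mpr hxp) (sub_ne_zero.mpr hxq)).mpr h
  rcases wbtw_total_of_sameRay_vsub_left hray with hw | hw
  · refine ⟨hw.collinear.mem_affineSpan_of_mem_of_ne (by simp) (by simp) (by simp) hpq,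
      fun hs => hxp ?_⟩
    exact hw.swap_left_iff.mp (mem_segment_iff_wbtw.mp hs)
  · refine ⟨hw.collinear.mem_affineSpan_of_mem_of_ne (by simp) (by simp) (by simp) hpq,
      fun hs => hxq ?_⟩
    exact hw.swap_left_iff.mp (mem_segment_iff_wbtw.mp hs).symm

theorem hasStrictFDerivAt_tau2 {m0 m1 m2 x : EuclideanSpace ℝ (Fin 2)}
    (h0 : x ≠ m0) (h1 : x ≠ m1) (h2 : x ≠ m2) :
    HasStrictFDerivAt (tau2 m0 m1 m2)
      ((innerSL ℝ (NormedSpace.normalize (x - m1) - NormedSpace.normalize (x - m0))).prod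
        (innerSL ℝ (NormedSpace.normalize (x - m2) - NormedSpace.normalize (x - m0)))) x := by
  simp only [map_sub]
  exact ((hasStrictFDerivAt_norm_sub h1).sub (hasStrictFDerivAt_norm_sub h0)).prodMk
    ((hasStrictFDerivAt_norm_sub h2).sub (hasStrictFDerivAt_norm_sub h0))

theorem stmt5 (m0 m1 m2 : EuclideanSpace ℝ (Fin 2))
    (hnc : ¬ Collinear ℝ ({m0, m1, m2} : Set (EuclideanSpace ℝ (Fin 2))))
    (x0 : EuclideanSpace ℝ (Fin 2))
    (hx0 : x0 ∉ ({m0, m1, m2} : Set (EuclideanSpace ℝ (Fin 2))))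
    (hreg : ¬ ∃ j k : Fin 3, j ≠ k ∧
        x0 ∈ affineSpan ℝ ({![m0, m1, m2] j, ![m0, m1, m2] k} : Set (EuclideanSpace ℝ (Fin 2))) ∧
        x0 ∉ segment ℝ (![m0, m1, m2] j) (![m0, m1, m2] k)) :
    ∃ W : Set (ℝ × ℝ), IsOpen W ∧ tau2 m0 m1 m2 x0 ∈ W ∧ W ⊆ Set.range (tau2 m0 m1 m2) := by
  simp only [Set.mem_insert_iff, Set.mem_singleton_iff, not_or] at hx0
  obtain ⟨h0, h1, h2⟩ := hx0
  have hunit {m} (hm : x0 ≠ m) : ‖NormedSpace.normalize (x0 - m)‖ = 1 :=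
    NormedSpace.norm_normalize_eq_one_iff.mpr (sub_ne_zero.mpr hm)
  have hdir (j k : Fin 3) (hjk : j ≠ k) (hm : ![m0, m1, m2] j ≠ ![m0, m1, m2] k)
      (hj : x0 ≠ ![m0, m1, m2] j) (hk : x0 ≠ ![m0, m1, m2] k) :
      NormedSpace.normalize (x0 - ![m0, m1, m2] j) ≠ NormedSpace.normalize (x0 - ![m0, m1, m2] k) :=
    fun h => hreg ⟨j, k, hjk, mem_affineSpan_pair_and_notMem_segment_of_normalize_eq hm hj hk h⟩
  have hinj := innerSL_prod_innerSL_sub_injective finrank_euclideanSpace_fin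
    (hunit h0) (hunit h1) (hunit h2)
    (hdir 0 1 (by decide) (ne₁₂_of_not_collinear hnc) h0 h1)
    (hdir 0 2 (by decide) (ne₁₃_of_not_collinear hnc) h0 h2)
    (hdir 1 2 (by decide) (ne₂₃_of_not_collinear hnc) h1 h2)
  have hrange := (hasStrictFDerivAt_tau2 h0 h1 h2).range_mem_nhds (by simp) hinj
  exact ⟨interior _, isOpen_interior, mem_interior_iff_mem_nhds.mpr hrange, interior_subset⟩
end

section
/- Assume m0, m1, m2 are pairwise distinct and let d10 = ‖m1 − m0‖, d20 = ‖m2 − m0‖, d21 = ‖m2 − m1‖. Then the set P₂ = {(t₁, t₂) ∈ ℝ² : |t₁| ≤ d10, |t₂| ≤ d20, |t₂ − t₁| ≤ d21} is convex, compact, and has nonempty interior. If moreover m0, m1, m2 are not collinear, then P₂ equals the convex hull of the six points (d10, d20), (d20 − d21, d20), (−d10, d21 − d10), (−d10, −d20), (d21 − d20, −d20), (d10, d10 − d21), so that P₂ is a hexagon. -/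
/-!
The region is cut out by three pairs of parallel lines, with normals `±(1,0)`, `±(0,1)` and
`±(-1,1)`. Every direction `(p, q)` lies in the cone spanned by two consecutive normals, so the
linear functional `p t₁ + q t₂` is bounded on the region by its value at the point where both
constraints are tight; these six points are the listed vertices. Since a closed convex set is
the intersection of its supporting half-spaces, the region lies in the convex hull of the
vertices, and the triangle inequality for the distances puts the vertices in the region.
-/

open Set

def tdoaRegion (a b c : ℝ) : Set (ℝ × ℝ) :=
  {t | |t.1| ≤ a ∧ |t.2| ≤ b ∧ |t.2 - t.1| ≤ c}

def tdoaVertices (a b c : ℝ) : Set (ℝ × ℝ) :=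
  {(a, b), (b - c, b), (-a, c - a), (-a, -b), (c - b, -b), (a, a - c)}

theorem convex_tdoaRegion (a b c : ℝ) : Convex ℝ (tdoaRegion a b c) := by
  have abs_le_convex : ∀ (f : ℝ × ℝ →ₗ[ℝ] ℝ) (r : ℝ), Convex ℝ {t | |f t| ≤ r} := fun f r => by
    simpa only [preimage, mem_Icc, ← abs_le] using (convex_Icc (-r) r).linear_preimage f
  exact (abs_le_convex (LinearMap.fst ℝ ℝ ℝ) a).inter ((abs_le_convex (LinearMap.snd ℝ ℝ ℝ) b).inter
    (abs_le_convex (LinearMap.snd ℝ ℝ ℝ - LinearMap.fst ℝ ℝ ℝ) c))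

theorem tdoaVertices_finite (a b c : ℝ) : (tdoaVertices a b c).Finite := by
  simp [tdoaVertices]

section

variable {a b c : ℝ}

theorem tdoaVertices_subset_tdoaRegion (hab : a ≤ b + c) (hba : b ≤ a + c) (hc : c ≤ a + b) :
    tdoaVertices a b c ⊆ tdoaRegion a b c := by
  simp only [tdoaVertices, insert_subset_iff, singleton_subset_iff, tdoaRegion, mem_ofPred_eq,
    abs_le]
  refine ⟨?_, ?_, ?_, ?_, ?_, ?_⟩ <;> refine ⟨⟨?_, ?_⟩, ⟨?_, ?_⟩, ?_, ?_⟩ <;> linarith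

theorem exists_mem_tdoaVertices_le {t : ℝ × ℝ} (ht : t ∈ tdoaRegion a b c) (p q : ℝ) :
    ∃ v ∈ tdoaVertices a b c, p * t.1 + q * t.2 ≤ p * v.1 + q * v.2 := by
  obtain ⟨h₁, h₂, h₃⟩ := ht
  rw [abs_le] at h₁ h₂ h₃
  simp only [tdoaVertices, mem_insert_iff, mem_singleton_iff, exists_eq_or_imp, exists_eq_left]
  rcases le_total 0 p with hp | hp <;> rcases le_total 0 q with hq | hq <;>
    rcases le_total 0 (p + q) with hpq | hpq
  all_goals first
    | (left; nlinarith)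
    | (right; left; nlinarith)
    | (right; right; left; nlinarith)
    | (right; right; right; left; nlinarith)
    | (right; right; right; right; left; nlinarith)
    | (right; right; right; right; right; nlinarith)

theorem tdoaRegion_eq_convexHull (hab : a ≤ b + c) (hba : b ≤ a + c) (hc : c ≤ a + b) :
    tdoaRegion a b c = convexHull ℝ (tdoaVertices a b c) := by
  refine Subset.antisymm (fun t ht => ?_)
    (convexHull_min (tdoaVertices_subset_tdoaRegion hab hba hc) (convex_tdoaRegion a b c))
  rw [← iInter_halfSpaces_eq (convex_convexHull ℝ _)
    ((tdoaVertices_finite a b c).isClosed_convexHull ℝ), mem_iInter]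
  intro l
  have hl : ∀ x : ℝ × ℝ, l x = l (1, 0) * x.1 + l (0, 1) * x.2 := fun x =>
    calc l x = l (x.1 • (1, 0) + x.2 • (0, 1)) := congrArg l (by ext <;> simp)
      _ = l (1, 0) * x.1 + l (0, 1) * x.2 := by
        rw [map_add, map_smul, map_smul, smul_eq_mul, smul_eq_mul, mul_comm x.1, mul_comm x.2]
  obtain ⟨v, hv, hle⟩ := exists_mem_tdoaVertices_le ht (l (1, 0)) (l (0, 1))
  exact ⟨v, subset_convexHull ℝ _ hv, by rwa [hl t, hl v]⟩

theorem interior_tdoaRegion_nonempty (ha : 0 < a) (hb : 0 < b) (hc : 0 < c) :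
    (interior (tdoaRegion a b c)).Nonempty := by
  have hopen : IsOpen {t : ℝ × ℝ | |t.1| < a ∧ |t.2| < b ∧ |t.2 - t.1| < c} :=
    (isOpen_lt continuous_fst.abs continuous_const).inter
      ((isOpen_lt continuous_snd.abs continuous_const).inter
        (isOpen_lt (continuous_snd.sub continuous_fst).abs continuous_const))
  refine ⟨0, interior_maximal (fun t ht => ?_) hopen ?_⟩
  · exact ⟨ht.1.le, ht.2.1.le, ht.2.2.le⟩
  · simpa using ⟨ha, hb, hc⟩

end

theorem stmt6 (m0 m1 m2 : EuclideanSpace ℝ (Fin 2))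
    (h01 : m0 ≠ m1) (h02 : m0 ≠ m2) (h12 : m1 ≠ m2)
    (d10 d20 d21 : ℝ)
    (hd10 : d10 = ‖m1 - m0‖) (hd20 : d20 = ‖m2 - m0‖) (hd21 : d21 = ‖m2 - m1‖)
    (P2 : Set (ℝ × ℝ))
    (hP2 : P2 = {t : ℝ × ℝ | |t.1| ≤ d10 ∧ |t.2| ≤ d20 ∧ |t.2 - t.1| ≤ d21}) :
    Convex ℝ P2 ∧ IsCompact P2 ∧ (interior P2).Nonempty ∧
    (¬ Collinear ℝ ({m0, m1, m2} : Set (EuclideanSpace ℝ (Fin 2))) →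
      P2 = convexHull ℝ
        ({(d10, d20), (d20 - d21, d20), (-d10, d21 - d10),
          (-d10, -d20), (d21 - d20, -d20), (d10, d10 - d21)} : Set (ℝ × ℝ))) := by
  rw [← dist_eq_norm] at hd10 hd20 hd21
  have hP : P2 = convexHull ℝ (tdoaVertices d10 d20 d21) := by
    rw [hP2, ← tdoaRegion_eq_convexHull] <;> subst hd10 hd20 hd21
    · rfl
    · linarith [dist_triangle m1 m2 m0, dist_comm m1 m2]
    · linarith [dist_triangle m2 m1 m0, dist_comm m0 m1]
    · linarith [dist_triangle m2 m0 m1, dist_comm m0 m1]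
  refine ⟨hP ▸ convex_convexHull ℝ _, hP ▸ (tdoaVertices_finite _ _ _).isCompact_convexHull ℝ,
    ?_, fun _ => hP⟩
  rw [hP2]
  exact interior_tdoaRegion_nonempty (hd10 ▸ dist_pos.2 h01.symm) (hd20 ▸ dist_pos.2 h02.symm)
    (hd21 ▸ dist_pos.2 h12.symm)
end

section
/- Assume m0, m1, m2 are pairwise distinct. Then τ₂(x) ∈ P₂ for every x ∈ ℝ², and the image τ₂(ℝ²) is a proper subset of P₂. If moreover m0, m1, m2 are not collinear, then τ₂(x) = (d10, d20) if and only if x = m0, τ₂(x) = (−d10, d21 − d10) if and only if x = m1, and τ₂(x) = (d21 − d20, −d20) if and only if x = m2. -/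
/-!
Each component of `τ₂` is a difference of distances to two microphones, so the triangle
inequality puts `τ₂(x)` in `P₂`. In a strictly convex plane the triangle inequality is an
equality only for points on a segment, so a vertex of `P₂` pins down the configuration.
`τ₂(x) = (d10, d20)` says that `m0` lies on the segments from `x` to `m1` and to `m2`, which for
`x ≠ m0` makes the microphones collinear. At the opposite corner `(-d10, -d20)`, and its
analogues at `m1` and `m2`, two microphones lie on a segment ending at the third one; if all
three corners were attained, each microphone would be an endpoint of the other two, which three
distinct points cannot be.
-/

section Betweenness

variable {R V P : Type*} [Field R] [LinearOrder R] [AddCommGroup V] [Module R V] [AddTorsor V P]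

theorem Wbtw.wbtw_or_wbtw [IsStrictOrderedRing R] {a b c x : P} (hb : Wbtw R a b x)
    (hc : Wbtw R a c x) : Wbtw R a b c ∨ Wbtw R a c b := by
  refine wbtw_total_of_sameRay_vsub_left <|
    hb.sameRay_vsub_left.trans hc.sameRay_vsub_left.symm fun hx => Or.inl ?_
  rw [vsub_eq_zero_iff_eq] at hx ⊢
  exact (wbtw_self_iff R).1 (hx ▸ hb)

theorem eq_of_wbtw_of_wbtw_of_not_collinear {a b c x : P} (h : ¬Collinear R {a, b, c})
    (hb : Wbtw R x a b) (hc : Wbtw R x a c) : x = a := by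
  by_contra hxa
  refine h (collinear_triple_of_mem_affineSpan_pair (right_mem_affineSpan_pair R x a) ?_ ?_)
  · exact hb.collinear.mem_affineSpan_of_mem_of_ne (by simp) (by simp) (by simp) hxa
  · exact hc.collinear.mem_affineSpan_of_mem_of_ne (by simp) (by simp) (by simp) hxa

end Betweenness

section StrictConvex

variable {V : Type*} [NormedAddCommGroup V] [NormedSpace ℝ V] [StrictConvexSpace ℝ V]

theorem dist_eq_add_or_of_dist_add_dist_eq {a b c x : V} (hb : dist a b + dist b x = dist a x)
    (hc : dist a c + dist c x = dist a x) :
    dist a c = dist a b + dist b c ∨ dist a b = dist a c + dist c b := by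
  rcases (dist_add_dist_eq_iff.1 hb).wbtw_or_wbtw (dist_add_dist_eq_iff.1 hc) with h | h
  · exact Or.inl h.dist_add_dist.symm
  · exact Or.inr h.dist_add_dist.symm

theorem dist_sub_dist_eq_and_iff_of_not_collinear {a b c x : V} (h : ¬Collinear ℝ {a, b, c}) :
    dist b x - dist a x = dist b a ∧ dist c x - dist a x = dist c a ↔ x = a := by
  refine ⟨fun ⟨hb, hc⟩ => eq_of_wbtw_of_wbtw_of_not_collinear h ?_ ?_, ?_⟩
  · exact dist_add_dist_eq_iff.1 (by linarith [dist_comm x a, dist_comm b a, dist_comm b x])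
  · exact dist_add_dist_eq_iff.1 (by linarith [dist_comm x a, dist_comm c a, dist_comm c x])
  · rintro rfl
    simp

end StrictConvex

section Tdoa

variable {m0 m1 m2 : EuclideanSpace ℝ (Fin 2)}

theorem tau2_apply (m0 m1 m2 x : EuclideanSpace ℝ (Fin 2)) :
    tau2 m0 m1 m2 x = (dist m1 x - dist m0 x, dist m2 x - dist m0 x) := by
  simp only [tau2, dist_eq_norm']

def tdoaPolygon (m0 m1 m2 : EuclideanSpace ℝ (Fin 2)) : Set (ℝ × ℝ) :=
  {t | |t.1| ≤ dist m1 m0 ∧ |t.2| ≤ dist m2 m0 ∧ |t.2 - t.1| ≤ dist m2 m1}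

theorem tau2_mem_tdoaPolygon (m0 m1 m2 x : EuclideanSpace ℝ (Fin 2)) :
    tau2 m0 m1 m2 x ∈ tdoaPolygon m0 m1 m2 := by
  rw [tau2_apply]
  refine ⟨abs_dist_sub_le m1 m0 x, abs_dist_sub_le m2 m0 x, ?_⟩
  simpa only [sub_sub_sub_cancel_right] using abs_dist_sub_le m2 m1 x

theorem range_tau2_ssubset (h01 : m0 ≠ m1) (h02 : m0 ≠ m2) (h12 : m1 ≠ m2) :
    Set.range (tau2 m0 m1 m2) ⊂ tdoaPolygon m0 m1 m2 := by
  refine (Set.range_subset_iff.2 (tau2_mem_tdoaPolygon m0 m1 m2)).ssubset_of_not_subset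
    fun hsub => ?_
  have h01 := dist_pos.2 h01
  have h02 := dist_pos.2 h02
  have h12 := dist_pos.2 h12
  have c01 := dist_comm m0 m1
  have c02 := dist_comm m0 m2
  have c12 := dist_comm m1 m2
  have t0 := dist_triangle m1 m0 m2
  have t1 := dist_triangle m0 m1 m2
  have t2 := dist_triangle m0 m2 m1
  have attained : ∀ t₁ t₂ : ℝ, |t₁| ≤ dist m1 m0 → |t₂| ≤ dist m2 m0 → |t₂ - t₁| ≤ dist m2 m1 →
      ∃ x, dist m1 x - dist m0 x = t₁ ∧ dist m2 x - dist m0 x = t₂ := fun t₁ t₂ h1 h2 h3 => by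
    obtain ⟨x, hx⟩ := hsub (show (t₁, t₂) ∈ tdoaPolygon m0 m1 m2 from ⟨h1, h2, h3⟩)
    exact ⟨x, by simpa [tau2_apply, Prod.ext_iff] using hx⟩
  obtain ⟨x, hx1, hx2⟩ := attained (-dist m1 m0) (-dist m2 m0) (by simp) (by simp)
    (abs_le.2 ⟨by linarith, by linarith⟩)
  obtain ⟨y, hy1, hy2⟩ := attained (dist m1 m0) (dist m1 m0 - dist m2 m1) (by simp)
    (abs_le.2 ⟨by linarith, by linarith⟩) (abs_le.2 ⟨by linarith, by linarith⟩)
  obtain ⟨z, hz1, hz2⟩ := attained (dist m2 m0 - dist m2 m1) (dist m2 m0)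
    (abs_le.2 ⟨by linarith, by linarith⟩) (by simp) (abs_le.2 ⟨by linarith, by linarith⟩)
  have hm0 := dist_eq_add_or_of_dist_add_dist_eq (a := m0) (b := m1) (c := m2) (x := x)
    (by linarith) (by linarith)
  have hm1 := dist_eq_add_or_of_dist_add_dist_eq (a := m1) (b := m0) (c := m2) (x := y)
    (by linarith) (by linarith)
  have hm2 := dist_eq_add_or_of_dist_add_dist_eq (a := m2) (b := m0) (c := m1) (x := z)
    (by linarith) (by linarith)
  rcases hm0 with h0 | h0 <;> rcases hm1 with h1 | h1 <;> rcases hm2 with h2 | h2 <;> linarith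

theorem tau2_eq_iff_eq_m0 (h : ¬Collinear ℝ {m0, m1, m2}) (x : EuclideanSpace ℝ (Fin 2)) :
    tau2 m0 m1 m2 x = (dist m1 m0, dist m2 m0) ↔ x = m0 := by
  rw [tau2_apply, Prod.mk.injEq]
  exact dist_sub_dist_eq_and_iff_of_not_collinear h

theorem tau2_eq_iff_eq_m1 (h : ¬Collinear ℝ {m0, m1, m2}) (x : EuclideanSpace ℝ (Fin 2)) :
    tau2 m0 m1 m2 x = (-dist m1 m0, dist m2 m1 - dist m1 m0) ↔ x = m1 := by
  rw [tau2_apply, Prod.mk.injEq,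
    ← dist_sub_dist_eq_and_iff_of_not_collinear (b := m0) (c := m2) (by rwa [Set.insert_comm])]
  constructor <;> rintro ⟨h1, h2⟩ <;> constructor <;> linarith [dist_comm m0 m1]

theorem tau2_eq_iff_eq_m2 (h : ¬Collinear ℝ {m0, m1, m2}) (x : EuclideanSpace ℝ (Fin 2)) :
    tau2 m0 m1 m2 x = (dist m2 m1 - dist m2 m0, -dist m2 m0) ↔ x = m2 := by
  rw [tau2_apply, Prod.mk.injEq, ← dist_sub_dist_eq_and_iff_of_not_collinear (b := m0) (c := m1)
    (by rwa [Set.insert_comm, Set.pair_comm])]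
  constructor <;> rintro ⟨h1, h2⟩ <;> constructor <;> linarith [dist_comm m0 m2, dist_comm m1 m2]

end Tdoa

theorem stmt7 (m0 m1 m2 : EuclideanSpace ℝ (Fin 2))
    (h01 : m0 ≠ m1) (h02 : m0 ≠ m2) (h12 : m1 ≠ m2)
    (d10 d20 d21 : ℝ)
    (hd10 : d10 = ‖m1 - m0‖) (hd20 : d20 = ‖m2 - m0‖) (hd21 : d21 = ‖m2 - m1‖)
    (P2 : Set (ℝ × ℝ))
    (hP2 : P2 = {t : ℝ × ℝ | |t.1| ≤ d10 ∧ |t.2| ≤ d20 ∧ |t.2 - t.1| ≤ d21}) :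
    (∀ x : EuclideanSpace ℝ (Fin 2), tau2 m0 m1 m2 x ∈ P2) ∧
    Set.range (tau2 m0 m1 m2) ⊂ P2 ∧
    (¬ Collinear ℝ ({m0, m1, m2} : Set (EuclideanSpace ℝ (Fin 2))) →
      (∀ x : EuclideanSpace ℝ (Fin 2),
        (tau2 m0 m1 m2 x = (d10, d20) ↔ x = m0) ∧
        (tau2 m0 m1 m2 x = (-d10, d21 - d10) ↔ x = m1) ∧
        (tau2 m0 m1 m2 x = (d21 - d20, -d20) ↔ x = m2))) := by
  rw [← dist_eq_norm] at hd10 hd20 hd21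
  subst hd10 hd20 hd21 hP2
  exact ⟨tau2_mem_tdoaPolygon m0 m1 m2, range_tau2_ssubset h01 h02 h12, fun hncol x =>
    ⟨tau2_eq_iff_eq_m0 hncol x, tau2_eq_iff_eq_m1 hncol x, tau2_eq_iff_eq_m2 hncol x⟩⟩
end

section
/- Assume m0, m1, m2 are not collinear, and set u = m1 − m0, v = m2 − m0, w = v − u, d10 = ‖u‖, d20 = ‖v‖, d21 = ‖w‖. Define a(t₁, t₂) = ‖t₂·u − t₁·v‖² − det(u, v)², where det(u, v) is the 2×2 determinant. Then: (i) every t ∈ ℝ² with a(t) = 0 satisfies t ∈ P₂; (ii) for each ε ∈ {1, −1}: {t : a(t) = 0 and t₁ = ε·d10} = {ε·T₂⁺}, {t : a(t) = 0 and t₂ = ε·d20} = {ε·T₁⁺}, and {t : a(t) = 0 and t₂ − t₁ = ε·d21} = {ε·T₀⁺}, where T₂⁺ = (d10, ⟨v, u⟩/d10), T₁⁺ = (⟨u, v⟩/d20, d20), T₀⁺ = (⟨u, w⟩/d21, ⟨v, w⟩/d21). In other words, the ellipse E = {a = 0} is inscribed in the hexagon P₂ and touches each of its six side-lines in exactly one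 point. -/
/-!
Write `G x y = ‖x‖² ‖y‖² - ⟪x, y⟫²` for the Gram determinant; in the plane `det(u, v)² = G u v`,
and non-collinearity of `m0, m1, m2` is `G u v > 0`. Put `z = t₂ • u - t₁ • v`. Since `z` is
`-t₁ • v` modulo `u`, `-t₂ • u` modulo `v`, and `(t₂ - t₁) • u` modulo `w = v - u`, the Gram
determinant of `z` with the side vector `x ∈ {u, v, w}` is `s² G u v`, where `s` is the
corresponding coordinate `t₁`, `t₂` or `t₂ - t₁`. On the ellipse `‖z‖² = G u v`, so
`s² G u v = G x z = ‖x‖² G u v - ⟪x, z⟫²`: hence `|s| ≤ ‖x‖`, with equality exactly when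
`⟪x, z⟫ = 0`, a linear equation with a single solution on each side line.
-/

open scoped RealInnerProductSpace

section Gram

variable {E : Type*} [NormedAddCommGroup E] [InnerProductSpace ℝ E]

def gramDet (x y : E) : ℝ := ‖x‖ ^ 2 * ‖y‖ ^ 2 - ⟪x, y⟫ ^ 2

lemma gramDet_comm (x y : E) : gramDet x y = gramDet y x := by
  rw [gramDet, gramDet, real_inner_comm]
  ring

lemma gramDet_smul_sub_smul (x y : E) (s t : ℝ) :
    gramDet x (s • x - t • y) = t ^ 2 * gramDet x y := by
  simp only [gramDet, norm_sub_sq_real, norm_smul, inner_sub_right, real_inner_smul_left,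
    real_inner_smul_right, real_inner_self_eq_norm_sq, Real.norm_eq_abs, mul_pow, sq_abs]
  ring

lemma gramDet_right_smul_sub_smul (x y : E) (s t : ℝ) :
    gramDet y (s • x - t • y) = s ^ 2 * gramDet x y := by
  rw [show s • x - t • y = (-t) • y - (-s) • x by module, gramDet_smul_sub_smul, gramDet_comm,
    neg_sq]

lemma gramDet_sub_self_right (x y : E) : gramDet x (y - x) = gramDet x y := by
  simpa [neg_add_eq_sub] using gramDet_smul_sub_smul x y (-1) (-1)

lemma gramDet_sub_smul_sub_smul (x y : E) (s t : ℝ) :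
    gramDet (y - x) (s • x - t • y) = (s - t) ^ 2 * gramDet x y := by
  rw [show s • x - t • y = (-t) • (y - x) - (t - s) • x by module, gramDet_smul_sub_smul,
    gramDet_comm, gramDet_sub_self_right, ← neg_sub, neg_sq]

lemma ne_zero_left_of_gramDet_pos {x y : E} (h : 0 < gramDet x y) : x ≠ 0 := by
  rintro rfl
  simp [gramDet] at h

lemma abs_le_norm_of_gramDet_eq {x z : E} {s g : ℝ} (hz : ‖z‖ ^ 2 = g) (hg : 0 < g)
    (h : gramDet x z = s ^ 2 * g) : |s| ≤ ‖x‖ := by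
  rw [gramDet, hz] at h
  have hle : s ^ 2 * g ≤ ‖x‖ ^ 2 * g := by nlinarith [sq_nonneg ⟪x, z⟫]
  simpa using sq_le_sq.1 (le_of_mul_le_mul_right hle hg)

lemma norm_sq_eq_iff_inner_eq_zero_of_gramDet_eq {x z : E} {s g : ℝ} (hx : x ≠ 0)
    (h : gramDet x z = s ^ 2 * g) (hs : |s| = ‖x‖) : ‖z‖ ^ 2 = g ↔ ⟪x, z⟫ = 0 := by
  rw [gramDet, ← sq_abs s, hs] at h
  have hx2 : ‖x‖ ^ 2 ≠ 0 := by positivity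
  constructor
  · intro hz
    rw [hz] at h
    exact pow_eq_zero_iff two_ne_zero |>.1 (by linarith)
  · intro hxz
    rw [hxz] at h
    exact mul_left_cancel₀ hx2 (by linarith)

open EuclideanGeometry InnerProductGeometry in
lemma gramDet_vsub_pos_of_not_collinear {P : Type*} [MetricSpace P] [NormedAddTorsor E P]
    {p₀ p₁ p₂ : P} (h : ¬ Collinear ℝ ({p₀, p₁, p₂} : Set P)) :
    0 < gramDet (p₁ -ᵥ p₀) (p₂ -ᵥ p₀) := by
  rw [Set.insert_comm, collinear_iff_eq_or_eq_or_angle_eq_zero_or_angle_eq_pi] at h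
  push Not at h
  obtain ⟨h₁, h₂, h0, hπ⟩ := h
  set x := p₁ -ᵥ p₀
  set y := p₂ -ᵥ p₀
  have hx : x ≠ 0 := vsub_ne_zero.2 h₁
  have hy : y ≠ 0 := vsub_ne_zero.2 h₂
  have hle := abs_le.1 (abs_real_inner_le_norm x y)
  have hlt : ⟪x, y⟫ < ‖x‖ * ‖y‖ :=
    hle.2.lt_of_ne fun he => h0 ((inner_eq_mul_norm_iff_angle_eq_zero hx hy).1 he)
  have hgt : -(‖x‖ * ‖y‖) < ⟪x, y⟫ :=
    hle.1.lt_of_ne fun he => hπ ((inner_eq_neg_mul_norm_iff_angle_eq_pi hx hy).1 he.symm)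
  have hfac : gramDet x y = (‖x‖ * ‖y‖ - ⟪x, y⟫) * (‖x‖ * ‖y‖ + ⟪x, y⟫) := by
    rw [gramDet]
    ring
  rw [hfac]
  exact mul_pos (by linarith) (by linarith)

lemma sq_cross_eq_gramDet (x y : EuclideanSpace ℝ (Fin 2)) :
    (x 0 * y 1 - x 1 * y 0) ^ 2 = gramDet x y := by
  simp only [gramDet, EuclideanSpace.norm_sq_eq, EuclideanSpace.inner_eq_star_dotProduct,
    Fin.sum_univ_two, dotProduct, Real.norm_eq_abs, sq_abs, Pi.star_apply, star_trivial]
  ring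

end Gram

section Ellipse

variable {E : Type*} [NormedAddCommGroup E] [InnerProductSpace ℝ E] {u v : E}

def ellipse (u v : E) : Set (ℝ × ℝ) := {t | ‖t.2 • u - t.1 • v‖ ^ 2 = gramDet u v}

lemma ellipse_subset_hexagon (hg : 0 < gramDet u v) :
    ellipse u v ⊆ {t | |t.1| ≤ ‖u‖ ∧ |t.2| ≤ ‖v‖ ∧ |t.2 - t.1| ≤ ‖v - u‖} := fun _ ht =>
  ⟨abs_le_norm_of_gramDet_eq ht hg (gramDet_smul_sub_smul u v _ _),
    abs_le_norm_of_gramDet_eq ht hg (gramDet_right_smul_sub_smul u v _ _),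
    abs_le_norm_of_gramDet_eq ht hg (gramDet_sub_smul_sub_smul u v _ _)⟩

lemma ellipse_sep_fst_eq (hg : 0 < gramDet u v) {ε : ℝ} (hε : |ε| = 1) :
    {t ∈ ellipse u v | t.1 = ε * ‖u‖} = {ε • (‖u‖, ⟪v, u⟫ / ‖u‖)} := by
  have hu : u ≠ 0 := ne_zero_left_of_gramDet_pos hg
  have hu' : ‖u‖ ≠ 0 := norm_ne_zero_iff.2 hu
  ext ⟨t₁, t₂⟩
  simp only [ellipse, Set.mem_ofPred_eq, Set.mem_singleton_iff, Prod.smul_mk, smul_eq_mul,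
    Prod.mk.injEq]
  rw [and_comm]
  refine and_congr_right fun h₁ => ?_
  rw [norm_sq_eq_iff_inner_eq_zero_of_gramDet_eq hu (gramDet_smul_sub_smul u v _ _)
      (by rw [h₁, abs_mul, hε, one_mul, abs_norm]),
    inner_sub_right, real_inner_smul_right, real_inner_smul_right, real_inner_self_eq_norm_sq,
    h₁, real_inner_comm]
  constructor <;> intro h
  · rw [mul_div_assoc', eq_div_iff hu']
    apply mul_left_cancel₀ hu'
    linear_combination h
  · rw [h]
    field_simp
    ring

lemma ellipse_sep_snd_eq (hg : 0 < gramDet u v) {ε : ℝ} (hε : |ε| = 1) :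
    {t ∈ ellipse u v | t.2 = ε * ‖v‖} = {ε • (⟪u, v⟫ / ‖v‖, ‖v‖)} := by
  have hv : v ≠ 0 := ne_zero_left_of_gramDet_pos (gramDet_comm u v ▸ hg)
  have hv' : ‖v‖ ≠ 0 := norm_ne_zero_iff.2 hv
  ext ⟨t₁, t₂⟩
  simp only [ellipse, Set.mem_ofPred_eq, Set.mem_singleton_iff, Prod.smul_mk, smul_eq_mul,
    Prod.mk.injEq]
  refine and_congr_left fun h₂ => ?_
  rw [norm_sq_eq_iff_inner_eq_zero_of_gramDet_eq hv (gramDet_right_smul_sub_smul u v _ _)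
      (by rw [h₂, abs_mul, hε, one_mul, abs_norm]),
    inner_sub_right, real_inner_smul_right, real_inner_smul_right, real_inner_self_eq_norm_sq,
    h₂, real_inner_comm]
  constructor <;> intro h
  · rw [mul_div_assoc', eq_div_iff hv']
    apply mul_left_cancel₀ hv'
    linear_combination -h
  · rw [h]
    field_simp
    ring

lemma ellipse_sep_snd_sub_fst_eq (hg : 0 < gramDet u v) {ε : ℝ} (hε : |ε| = 1) :
    {t ∈ ellipse u v | t.2 - t.1 = ε * ‖v - u‖} =
      {ε • (⟪u, v - u⟫ / ‖v - u‖, ⟪v, v - u⟫ / ‖v - u‖)} := by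
  have hw : v - u ≠ 0 :=
    ne_zero_left_of_gramDet_pos (by rwa [gramDet_comm, gramDet_sub_self_right])
  have hw' : ‖v - u‖ ≠ 0 := norm_ne_zero_iff.2 hw
  have hvw : ⟪v, v - u⟫ = ⟪u, v - u⟫ + ‖v - u‖ ^ 2 := by
    rw [← real_inner_self_eq_norm_sq, ← inner_add_left, add_sub_cancel]
  ext ⟨t₁, t₂⟩
  simp only [ellipse, Set.mem_ofPred_eq, Set.mem_singleton_iff, Prod.smul_mk, smul_eq_mul,
    Prod.mk.injEq]
  refine (and_congr_left fun h₂₁ => norm_sq_eq_iff_inner_eq_zero_of_gramDet_eq hw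
    (gramDet_sub_smul_sub_smul u v t₂ t₁) (by rw [h₂₁, abs_mul, hε, one_mul, abs_norm])).trans ?_
  rw [inner_sub_right, real_inner_smul_right, real_inner_smul_right, real_inner_comm u,
    real_inner_comm v, hvw]
  constructor
  · rintro ⟨h, h₂₁⟩
    obtain rfl : t₂ = t₁ + ε * ‖v - u‖ := by linarith
    have h₁ : t₁ = ε * (⟪u, v - u⟫ / ‖v - u‖) := by
      rw [mul_div_assoc', eq_div_iff hw']
      apply mul_left_cancel₀ hw'
      linear_combination -h
    refine ⟨h₁, ?_⟩
    rw [h₁]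
    field_simp
  · rintro ⟨rfl, rfl⟩
    constructor <;> field_simp <;> ring

end Ellipse

theorem stmt9 (m0 m1 m2 : EuclideanSpace ℝ (Fin 2))
    (hnc : ¬ Collinear ℝ ({m0, m1, m2} : Set (EuclideanSpace ℝ (Fin 2))))
    (u v w : EuclideanSpace ℝ (Fin 2)) (hu : u = m1 - m0) (hv : v = m2 - m0) (hw : w = v - u)
    (d10 d20 d21 : ℝ) (hd10 : d10 = ‖u‖) (hd20 : d20 = ‖v‖) (hd21 : d21 = ‖w‖)
    (a : ℝ × ℝ → ℝ)
    (ha : ∀ t : ℝ × ℝ, a t = ‖t.2 • u - t.1 • v‖ ^ 2 - (u 0 * v 1 - u 1 * v 0) ^ 2)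
    (P2 : Set (ℝ × ℝ))
    (hP2 : P2 = {t : ℝ × ℝ | |t.1| ≤ d10 ∧ |t.2| ≤ d20 ∧ |t.2 - t.1| ≤ d21})
    (T2p T1p T0p : ℝ × ℝ)
    (hT2 : T2p = (d10, (inner ℝ v u : ℝ) / d10))
    (hT1 : T1p = ((inner ℝ u v : ℝ) / d20, d20))
    (hT0 : T0p = ((inner ℝ u w : ℝ) / d21, (inner ℝ v w : ℝ) / d21)) :
    (∀ t : ℝ × ℝ, a t = 0 → t ∈ P2) ∧
    (∀ ε : ℝ, ε = 1 ∨ ε = -1 →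
      ({t : ℝ × ℝ | a t = 0 ∧ t.1 = ε * d10} = {ε • T2p}) ∧
      ({t : ℝ × ℝ | a t = 0 ∧ t.2 = ε * d20} = {ε • T1p}) ∧
      ({t : ℝ × ℝ | a t = 0 ∧ t.2 - t.1 = ε * d21} = {ε • T0p})) := by
  subst hu hv hw hd10 hd20 hd21 hP2 hT2 hT1 hT0
  have hg : 0 < gramDet (m1 - m0) (m2 - m0) := gramDet_vsub_pos_of_not_collinear hnc
  have ha' : ∀ t, a t = 0 ↔ t ∈ ellipse (m1 - m0) (m2 - m0) := fun t => by
    rw [ha, sq_cross_eq_gramDet, sub_eq_zero]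
    rfl
  simp only [ha']
  refine ⟨fun _ ht => ellipse_subset_hexagon hg ht, fun ε hε => ?_⟩
  have hε' : |ε| = 1 := by rcases hε with rfl | rfl <;> simp
  exact ⟨ellipse_sep_fst_eq hg hε', ellipse_sep_snd_eq hg hε', ellipse_sep_snd_sub_fst_eq hg hε'⟩
end

section
/- Assume m0, m1, m2 are not collinear, with u = m1 − m0, v = m2 − m0, d10 = ‖u‖, d20 = ‖v‖, and let b̄(t₁, t₂) = ⟨t₂·u − t₁·v, (d20² − t₂²)·u − (d10² − t₁²)·v⟩. Then there exists t ∈ ℝ² with b̄(t) = 0 and ∇b̄(t) = (0, 0) if and only if d10 = d20. Moreover, when d10 = d20, the zero set {t ∈ ℝ² : b̄(t) = 0} equals the union of the line {t₁ + t₂ = 0} and the conic {t₁² − (e + 1)·t₁·t₂ + t₂² + d10²·(e − 1) = 0}, where e = ⟨u, v⟩/(d10·d20). -/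
/-!
Expanding the inner product, `b̄` is the cubic `tauCubic A B C` in the Gram entries `A = d10²`,
`B = ⟪u, v⟫`, `C = d20²`, and non-collinearity is strict Cauchy–Schwarz `B² < A C`. By Euler's
identity a singular zero is a common zero of the linear part `C (A - B) t₁ + A (C - B) t₂` and of
the cubic part. On the line where the linear part vanishes the cubic part is a multiple of
`A C (A - C) (A C - B²)²`, so `A ≠ C` forces `t = 0`, which is singular only when `A = B = C`.
Conversely, for `A = C` the cubic factors as `-A (t₁ + t₂) · (conic)`, and `(r, -r)` with
`(3 A + B) r² = A (A - B)` is a singular zero.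
-/

open ContinuousLinearMap

theorem sq_inner_vsub_lt_of_not_collinear {V P : Type*} [NormedAddCommGroup V]
    [InnerProductSpace ℝ V] [AddTorsor V P] {p₀ p₁ p₂ : P}
    (h : ¬ Collinear ℝ ({p₀, p₁, p₂} : Set P)) :
    inner ℝ (p₁ -ᵥ p₀) (p₂ -ᵥ p₀) ^ 2 < ‖p₁ -ᵥ p₀‖ ^ 2 * ‖p₂ -ᵥ p₀‖ ^ 2 := by
  set u := p₁ -ᵥ p₀
  set v := p₂ -ᵥ p₀
  have hindep : ¬ (u = 0 ∨ ∃ r : ℝ, v = r • u) := by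
    rintro (hu | ⟨r, hr⟩)
    · exact ne₁₂_of_not_collinear h (vsub_eq_zero_iff_eq.mp hu).symm
    · refine h ((collinear_iff_of_mem (p₀ := p₀) (by simp)).mpr ⟨u, ?_⟩)
      simp only [Set.mem_insert_iff, Set.mem_singleton_iff]
      rintro p (rfl | rfl | rfl)
      exacts [⟨0, by simp⟩, ⟨1, by simp [u]⟩, ⟨r, by rw [← hr, vsub_vadd]⟩]
  have hlt : |inner ℝ u v| < ‖u‖ * ‖v‖ :=
    (abs_real_inner_le_norm u v).lt_of_ne (mt ((norm_inner_eq_norm_tfae ℝ u v).out 0 2).mp hindep)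
  rw [← mul_pow, ← sq_abs]
  exact pow_lt_pow_left₀ hlt (abs_nonneg _) two_ne_zero

def tauCubic (A B C : ℝ) (t : ℝ × ℝ) : ℝ :=
  C * (A - B) * t.1 + A * (C - B) * t.2 + (B * t.1 * t.2 * (t.1 + t.2) - C * t.1 ^ 3 - A * t.2 ^ 3)

theorem inner_smul_sub_smul_eq_tauCubic {E : Type*} [NormedAddCommGroup E] [InnerProductSpace ℝ E]
    (u v : E) (t : ℝ × ℝ) :
    inner ℝ (t.2 • u - t.1 • v) ((‖v‖ ^ 2 - t.2 ^ 2) • u - (‖u‖ ^ 2 - t.1 ^ 2) • v) =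
      tauCubic (‖u‖ ^ 2) (inner ℝ u v) (‖v‖ ^ 2) t := by
  simp only [tauCubic, inner_sub_left, inner_sub_right, real_inner_smul_left, real_inner_smul_right,
    real_inner_comm u v, real_inner_self_eq_norm_sq]
  ring

theorem hasFDerivAt_tauCubic (A B C : ℝ) (t : ℝ × ℝ) :
    HasFDerivAt (tauCubic A B C)
      ((C * (A - B) + B * (2 * t.1 * t.2 + t.2 ^ 2) - 3 * C * t.1 ^ 2) • fst ℝ ℝ ℝ +
        (A * (C - B) + B * (t.1 ^ 2 + 2 * t.1 * t.2) - 3 * A * t.2 ^ 2) • snd ℝ ℝ ℝ) t := by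
  have hx : HasFDerivAt (fun s : ℝ × ℝ => s.1) (fst ℝ ℝ ℝ) t := hasFDerivAt_fst
  have hy : HasFDerivAt (fun s : ℝ × ℝ => s.2) (snd ℝ ℝ ℝ) t := hasFDerivAt_snd
  refine ((((hx.const_mul _).add (hy.const_mul _)).add
    ((((hx.const_mul B).mul hy).mul (hx.add hy)).sub ((hx.pow 3).const_mul C) |>.sub
      ((hy.pow 3).const_mul A)))).congr_fderiv ?_
  ext <;> simp <;> ring

theorem smul_fst_add_smul_snd_eq_zero_iff {a b : ℝ} :
    a • fst ℝ ℝ ℝ + b • snd ℝ ℝ ℝ = 0 ↔ a = 0 ∧ b = 0 := by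
  refine ⟨fun h => ⟨by simpa using congr($h (1, 0)), by simpa using congr($h (0, 1))⟩, ?_⟩
  rintro ⟨rfl, rfl⟩
  simp

theorem fderiv_tauCubic_eq_zero_iff {A B C : ℝ} {t : ℝ × ℝ} :
    fderiv ℝ (tauCubic A B C) t = 0 ↔
      C * (A - B) + B * (2 * t.1 * t.2 + t.2 ^ 2) - 3 * C * t.1 ^ 2 = 0 ∧
        A * (C - B) + B * (t.1 ^ 2 + 2 * t.1 * t.2) - 3 * A * t.2 ^ 2 = 0 := by
  rw [(hasFDerivAt_tauCubic A B C t).fderiv, smul_fst_add_smul_snd_eq_zero_iff]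

def tauCubicTop (A B C x y : ℝ) : ℝ := B * x * y * (x + y) - C * x ^ 3 - A * y ^ 3

theorem tauCubicTop_mul (A B C s x y : ℝ) :
    tauCubicTop A B C (s * x) (s * y) = s ^ 3 * tauCubicTop A B C x y := by
  unfold tauCubicTop; ring

-- `(A (C - B), -C (A - B))` spans the line on which the linear part of `tauCubic` vanishes.
theorem tauCubicTop_eq (A B C : ℝ) :
    tauCubicTop A B C (A * (C - B)) (-(C * (A - B))) = A * C * (A - C) * (A * C - B ^ 2) ^ 2 := by
  unfold tauCubicTop; ring

theorem eq_of_tauCubic_singular {A B C : ℝ} (hA : A ≠ 0) (hC : C ≠ 0) (hB : B ^ 2 ≠ A * C)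
    {t : ℝ × ℝ} (hzero : tauCubic A B C t = 0) (hcrit : fderiv ℝ (tauCubic A B C) t = 0) :
    A = C := by
  obtain ⟨x, y⟩ := t
  obtain ⟨hdx, hdy⟩ := fderiv_tauCubic_eq_zero_iff.mp hcrit
  simp only [tauCubic] at hzero hdx hdy
  set p := C * (A - B)
  set q := A * (C - B)
  -- Euler's identity `x ∂ₓ + y ∂_y = (linear part) + 3 (cubic part)` separates the two parts.
  have hlin : q * y = -(p * x) := by linear_combination (3 * hzero - x * hdx - y * hdy) / 2
  have htop : tauCubicTop A B C x y = 0 := by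
    unfold tauCubicTop; linear_combination (x * hdx + y * hdy - hzero) / 2
  by_contra hAC
  have hK : tauCubicTop A B C q (-p) ≠ 0 := by
    rw [tauCubicTop_eq]
    exact mul_ne_zero (mul_ne_zero (mul_ne_zero hA hC) (sub_ne_zero.mpr hAC))
      (pow_ne_zero 2 (sub_ne_zero.mpr hB.symm))
  have hx : x = 0 := by
    refine pow_eq_zero_iff three_ne_zero |>.mp <| (mul_eq_zero.mp ?_).resolve_right hK
    calc x ^ 3 * tauCubicTop A B C q (-p) = tauCubicTop A B C (q * x) (-(p * x)) := by
          rw [← tauCubicTop_mul]; congr 1 <;> ring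
      _ = q ^ 3 * tauCubicTop A B C x y := by rw [← hlin, tauCubicTop_mul]
      _ = 0 := by rw [htop, mul_zero]
  have hy : y = 0 := by
    subst hx
    simpa [tauCubicTop, hA] using htop
  subst hx hy
  have hp : p = 0 := by linear_combination hdx
  have hq : q = 0 := by linear_combination hdy
  have hAB := sub_eq_zero.mp ((mul_eq_zero.mp hp).resolve_left hC)
  have hCB := sub_eq_zero.mp ((mul_eq_zero.mp hq).resolve_left hA)
  exact hAC (hAB.trans hCB.symm)

theorem exists_tauCubic_singular {A B : ℝ} (hB : |B| < A) :
    ∃ t, tauCubic A B A t = 0 ∧ fderiv ℝ (tauCubic A B A) t = 0 := by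
  obtain ⟨hlt, hgt⟩ := abs_lt.mp hB
  have h3AB : 0 < 3 * A + B := by linarith
  have hAB : 0 ≤ A * (A - B) / (3 * A + B) :=
    div_nonneg (mul_nonneg (by linarith) (by linarith)) h3AB.le
  set r := √(A * (A - B) / (3 * A + B))
  have hr : (3 * A + B) * r ^ 2 = A * (A - B) := by
    rw [Real.sq_sqrt hAB]; field_simp
  refine ⟨(r, -r), by unfold tauCubic; ring, fderiv_tauCubic_eq_zero_iff.mpr ⟨?_, ?_⟩⟩ <;>
    linear_combination -hr

theorem tauCubic_eq_zero_iff {A e : ℝ} (hA : A ≠ 0) (t : ℝ × ℝ) :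
    tauCubic A (e * A) A t = 0 ↔
      t.1 + t.2 = 0 ∨ t.1 ^ 2 - (e + 1) * t.1 * t.2 + t.2 ^ 2 + A * (e - 1) = 0 := by
  have hfac : tauCubic A (e * A) A t =
      -A * ((t.1 + t.2) * (t.1 ^ 2 - (e + 1) * t.1 * t.2 + t.2 ^ 2 + A * (e - 1))) := by
    unfold tauCubic; ring
  rw [hfac, mul_eq_zero, mul_eq_zero, or_iff_right (neg_ne_zero.mpr hA)]

theorem stmt11 (m0 m1 m2 : EuclideanSpace ℝ (Fin 2))
    (hnc : ¬ Collinear ℝ ({m0, m1, m2} : Set (EuclideanSpace ℝ (Fin 2))))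
    (u v : EuclideanSpace ℝ (Fin 2)) (hu : u = m1 - m0) (hv : v = m2 - m0)
    (d10 d20 : ℝ) (hd10 : d10 = ‖u‖) (hd20 : d20 = ‖v‖)
    (bbar : ℝ × ℝ → ℝ)
    (hb : ∀ t : ℝ × ℝ,
      bbar t = (inner ℝ (t.2 • u - t.1 • v)
        ((d20 ^ 2 - t.2 ^ 2) • u - (d10 ^ 2 - t.1 ^ 2) • v) : ℝ))
    (e : ℝ) (he : e = (inner ℝ u v : ℝ) / (d10 * d20)) :
    ((∃ t : ℝ × ℝ, bbar t = 0 ∧ fderiv ℝ bbar t = 0) ↔ d10 = d20) ∧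
    (d10 = d20 →
      {t : ℝ × ℝ | bbar t = 0} =
        {t : ℝ × ℝ | t.1 + t.2 = 0} ∪
        {t : ℝ × ℝ | t.1 ^ 2 - (e + 1) * t.1 * t.2 + t.2 ^ 2 + d10 ^ 2 * (e - 1) = 0}) := by
  have hcs : inner ℝ u v ^ 2 < d10 ^ 2 * d20 ^ 2 := by
    simpa only [hu, hv, hd10, hd20, vsub_eq_sub] using sq_inner_vsub_lt_of_not_collinear hnc
  have hbbar : bbar = tauCubic (d10 ^ 2) (inner ℝ u v) (d20 ^ 2) := by
    funext t
    rw [hb, hd10, hd20, inner_smul_sub_smul_eq_tauCubic]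
  subst hbbar
  have hprod : 0 < d10 ^ 2 * d20 ^ 2 := (sq_nonneg _).trans_lt hcs
  have hd10pos : 0 < d10 := (hd10 ▸ norm_nonneg u).lt_of_ne' (by rintro rfl; simp at hprod)
  have hd20pos : 0 < d20 := (hd20 ▸ norm_nonneg v).lt_of_ne' (by rintro rfl; simp at hprod)
  refine ⟨⟨fun ⟨t, hzero, hcrit⟩ => ?_, fun hd => ?_⟩, fun hd => ?_⟩
  · exact (pow_left_inj₀ hd10pos.le hd20pos.le two_ne_zero).mp <|
      eq_of_tauCubic_singular (by positivity) (by positivity) hcs.ne hzero hcrit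
  · subst hd
    exact exists_tauCubic_singular (abs_lt_of_sq_lt_sq (by rwa [sq (d10 ^ 2)]) (by positivity))
  · subst hd
    have hB : inner ℝ u v = e * d10 ^ 2 := by
      rw [he]; field_simp
    ext t
    rw [Set.mem_union, Set.mem_ofPred_eq, hB, tauCubic_eq_zero_iff (by positivity)]
    rfl
end

section
/- Assume m0, m1, m2 are not collinear. Let t = (t₁, t₂) ∈ ℝ² satisfy |t₁| < d10, |t₂| < d20, |t₂ − t₁| < d21 (i.e. t lies in the interior of P₂), a(t) > 0, and b̄(t) > 0. Then the fiber {x ∈ ℝ² : τ₂(x) = t} has exactly two elements. -/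
open Set
open scoped RealInnerProductSpace

local notation "ℝ²" => EuclideanSpace ℝ (Fin 2)

theorem encard_setOf_quadratic_eq_zero {K : Type*} [Field K] [NeZero (2 : K)] {a b c s : K}
    (ha : a ≠ 0) (hs : s ≠ 0) (hd : discrim a b c = s * s) :
    {x | a * (x * x) + b * x + c = 0}.encard = 2 := by
  have hroots : {x | a * (x * x) + b * x + c = 0} = {(-b + s) / (2 * a), (-b - s) / (2 * a)} := by
    ext x
    exact quadratic_eq_zero_iff ha hd x
  rw [hroots, encard_pair]
  intro h
  field_simp at h
  have h2s : (2 : K) * s = 0 := by linear_combination h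
  exact hs ((mul_eq_zero.1 h2s).resolve_left two_ne_zero)

theorem encard_setOf_sub_eq_comp_norm_sub {E : Type*} [SeminormedAddCommGroup E] (c : E)
    (f : ℝ → E) : {x : E | x - c = f ‖x - c‖}.encard = {r : ℝ | ‖f r‖ = r}.encard := by
  have himage : {x : E | x - c = f ‖x - c‖} = (fun r => c + f r) '' {r | ‖f r‖ = r} := by
    ext x
    constructor
    · intro (hx : x - c = f ‖x - c‖)
      refine ⟨‖x - c‖, ?_, ?_⟩
      · change ‖f ‖x - c‖‖ = ‖x - c‖
        rw [← hx]
      · change c + f ‖x - c‖ = x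
        rw [← hx, add_sub_cancel]
    · rintro ⟨r, hr : ‖f r‖ = r, rfl⟩
      change c + f r - c = f ‖c + f r - c‖
      rw [add_sub_cancel_left, hr]
  rw [himage]
  refine InjOn.encard_image fun r hr s hs hrs => ?_
  rw [← hr, ← hs, add_left_cancel hrs]

theorem norm_sub_sub_norm_eq_iff {F : Type*} [NormedAddCommGroup F] [InnerProductSpace ℝ F]
    {u : F} {s : ℝ} (hs : |s| < ‖u‖) (y : F) :
    ‖y - u‖ - ‖y‖ = s ↔ ⟪u, y⟫ = (‖u‖ ^ 2 - s ^ 2) / 2 - ‖y‖ * s := by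
  have hexp := norm_sub_sq_real y u
  rw [real_inner_comm] at hexp
  rw [sub_eq_iff_eq_add']
  constructor
  · intro h
    rw [h] at hexp
    linear_combination hexp / 2
  · intro h
    have habs : ‖y - u‖ = |‖y‖ + s| := by
      rw [← abs_norm, ← sq_eq_sq_iff_abs_eq_abs, hexp, h]
      ring
    have hnonneg : 0 ≤ ‖y‖ + s := by
      by_contra! hneg
      rw [abs_of_neg hneg] at habs
      have := norm_sub_rev u y ▸ norm_sub_norm_le u y
      linarith [neg_le_abs s]
    rw [habs, abs_of_nonneg hnonneg]

theorem setOf_norm_eq_self_eq_setOf_quadratic_eq_zero {E : Type*} [SeminormedAddCommGroup E]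
    {f : ℝ → E} {k a b c : ℝ} (hk : k ≠ 0) (ha : 0 < a) (hb : 0 < b) (hc : 0 ≤ c)
    (hf : ∀ r, k * (‖f r‖ ^ 2 - r ^ 2) = a * (r * r) + -b * r + c) :
    {r | ‖f r‖ = r} = {r | a * (r * r) + -b * r + c = 0} := by
  ext r
  change ‖f r‖ = r ↔ a * (r * r) + -b * r + c = 0
  rw [← hf, mul_eq_zero, or_iff_right hk, sub_eq_zero]
  refine ⟨fun h => by rw [h], fun h => ?_⟩
  have hr : 0 ≤ r := by
    have hroot : a * (r * r) + -b * r + c = 0 := by rw [← hf, h, sub_self, mul_zero]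
    by_contra! hr
    nlinarith [mul_pos ha (mul_pos_of_neg_of_neg hr hr), mul_pos hb (neg_pos.2 hr)]
  exact (sq_eq_sq₀ (norm_nonneg _) hr).1 h

def det2 (u v : ℝ²) : ℝ := u 0 * v 1 - u 1 * v 0

theorem EuclideanSpace.norm_sq_fin_two (w : ℝ²) : ‖w‖ ^ 2 = w 0 ^ 2 + w 1 ^ 2 := by
  simp [EuclideanSpace.real_norm_sq_eq, Fin.sum_univ_two]

theorem EuclideanSpace.inner_fin_two (x y : ℝ²) : ⟪x, y⟫ = x 0 * y 0 + x 1 * y 1 := by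
  simp [PiLp.inner_apply, Fin.sum_univ_two, mul_comm]

theorem norm_sq_smul_sub_inner_smul (u v : ℝ²) :
    ‖u‖ ^ 2 • v - ⟪u, v⟫ • u = det2 u v • !₂[-u 1, u 0] := by
  ext i
  fin_cases i <;>
  · simp [EuclideanSpace.norm_sq_fin_two, EuclideanSpace.inner_fin_two, det2]
    ring

theorem collinear_of_det2_vsub_eq_zero {m0 m1 m2 : ℝ²} (h : det2 (m1 - m0) (m2 - m0) = 0) :
    Collinear ℝ ({m0, m1, m2} : Set ℝ²) := by
  by_cases hm : m1 = m0
  · rw [hm, insert_eq_of_mem (mem_insert _ _)]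
    exact collinear_pair ℝ m0 m2
  · have hu : ‖m1 - m0‖ ^ 2 ≠ 0 := by simpa [sub_eq_zero] using hm
    have hline : m2 = AffineMap.lineMap m0 m1 (⟪m1 - m0, m2 - m0⟫ / ‖m1 - m0‖ ^ 2) := by
      have hdep := norm_sq_smul_sub_inner_smul (m1 - m0) (m2 - m0)
      rw [h, zero_smul, sub_eq_zero] at hdep
      rw [AffineMap.lineMap_apply, vsub_eq_sub, vadd_eq_add, div_eq_inv_mul, mul_smul, ← hdep,
        smul_smul, inv_mul_cancel₀ hu, one_smul, sub_add_cancel]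
    rw [pair_comm, insert_comm]
    apply collinear_insert_of_mem_affineSpan_pair
    rw [hline]
    exact AffineMap.lineMap_mem_affineSpan_pair _ _ _

theorem EuclideanSpace.eq_iff_fin_two {y z : ℝ²} : y = z ↔ y 0 = z 0 ∧ y 1 = z 1 := by
  refine ⟨fun h => h ▸ ⟨rfl, rfl⟩, fun ⟨h0, h1⟩ => ?_⟩
  ext i
  fin_cases i
  exacts [h0, h1]

noncomputable def cramer (u v : ℝ²) (α β : ℝ) : ℝ² :=
  !₂[(α * v 1 - β * u 1) / det2 u v, (β * u 0 - α * v 0) / det2 u v]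

section Cramer

variable {u v : ℝ²} (hD : det2 u v ≠ 0)
include hD

theorem inner_eq_and_inner_eq_iff_eq_cramer {y : ℝ²} {α β : ℝ} :
    ⟪u, y⟫ = α ∧ ⟪v, y⟫ = β ↔ y = cramer u v α β := by
  rw [EuclideanSpace.eq_iff_fin_two, EuclideanSpace.inner_fin_two, EuclideanSpace.inner_fin_two]
  change _ ↔ y 0 = (α * v 1 - β * u 1) / det2 u v ∧ y 1 = (β * u 0 - α * v 0) / det2 u v
  rw [eq_div_iff hD, eq_div_iff hD]
  unfold det2 at hD ⊢
  constructor
  · rintro ⟨hu, hv⟩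
    constructor
    · linear_combination v 1 * hu - u 1 * hv
    · linear_combination u 0 * hv - v 0 * hu
  · rintro ⟨h0, h1⟩
    constructor <;> refine mul_right_cancel₀ hD ?_
    · linear_combination u 0 * h0 + u 1 * h1
    · linear_combination v 0 * h0 + v 1 * h1

theorem det2_sq_mul_norm_sq_cramer (α β : ℝ) :
    det2 u v ^ 2 * ‖cramer u v α β‖ ^ 2 = ‖α • v - β • u‖ ^ 2 := by
  rw [EuclideanSpace.norm_sq_fin_two, EuclideanSpace.norm_sq_fin_two]
  change det2 u v ^ 2 * (((α * v 1 - β * u 1) / det2 u v) ^ 2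
    + ((β * u 0 - α * v 0) / det2 u v) ^ 2) = _
  field_simp
  simp only [PiLp.sub_apply, PiLp.smul_apply, smul_eq_mul]
  ring

theorem det2_sq_mul_norm_sq_cramer_sub_sq (t₁ t₂ A B r : ℝ) :
    det2 u v ^ 2 * (‖cramer u v (A / 2 - r * t₁) (B / 2 - r * t₂)‖ ^ 2 - r ^ 2) =
      (‖t₂ • u - t₁ • v‖ ^ 2 - det2 u v ^ 2) * (r * r) + -⟪t₂ • u - t₁ • v, B • u - A • v⟫ * r
        + ‖(B / 2) • u - (A / 2) • v‖ ^ 2 := by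
  rw [mul_sub, det2_sq_mul_norm_sq_cramer hD]
  simp only [EuclideanSpace.norm_sq_fin_two, EuclideanSpace.inner_fin_two, PiLp.sub_apply,
    PiLp.smul_apply, smul_eq_mul]
  ring

end Cramer

/- Lagrange's identity `‖w‖²‖p‖² - ⟪w, p⟫² = det2 w p ^ 2`, for `w = t₂ • u - t₁ • v` and `p` the
vector in the constant term, is what makes `det2 u v ^ 2` factor out. -/
theorem discrim_tdoa (u v : ℝ²) (t₁ t₂ : ℝ) :
    discrim (‖t₂ • u - t₁ • v‖ ^ 2 - det2 u v ^ 2)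
      (-⟪t₂ • u - t₁ • v, (‖v‖ ^ 2 - t₂ ^ 2) • u - (‖u‖ ^ 2 - t₁ ^ 2) • v⟫)
      (‖((‖v‖ ^ 2 - t₂ ^ 2) / 2) • u - ((‖u‖ ^ 2 - t₁ ^ 2) / 2) • v‖ ^ 2) =
    det2 u v ^ 2 * ((‖u‖ ^ 2 - t₁ ^ 2) * (‖v‖ ^ 2 - t₂ ^ 2) * (‖v - u‖ ^ 2 - (t₂ - t₁) ^ 2)) := by
  simp only [discrim, EuclideanSpace.norm_sq_fin_two, EuclideanSpace.inner_fin_two,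
    PiLp.sub_apply, PiLp.smul_apply, smul_eq_mul, det2]
  ring

theorem stmt14 (m0 m1 m2 : EuclideanSpace ℝ (Fin 2))
    (hnc : ¬ Collinear ℝ ({m0, m1, m2} : Set (EuclideanSpace ℝ (Fin 2))))
    (u v : EuclideanSpace ℝ (Fin 2)) (hu : u = m1 - m0) (hv : v = m2 - m0)
    (d10 d20 d21 : ℝ) (hd10 : d10 = ‖u‖) (hd20 : d20 = ‖v‖) (hd21 : d21 = ‖v - u‖)
    (a : ℝ × ℝ → ℝ)
    (ha : ∀ t : ℝ × ℝ, a t = ‖t.2 • u - t.1 • v‖ ^ 2 - (u 0 * v 1 - u 1 * v 0) ^ 2)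
    (bbar : ℝ × ℝ → ℝ)
    (hb : ∀ t : ℝ × ℝ,
      bbar t = (inner ℝ (t.2 • u - t.1 • v)
        ((d20 ^ 2 - t.2 ^ 2) • u - (d10 ^ 2 - t.1 ^ 2) • v) : ℝ))
    (t : ℝ × ℝ)
    (hint : |t.1| < d10 ∧ |t.2| < d20 ∧ |t.2 - t.1| < d21)
    (hat : 0 < a t) (hbt : 0 < bbar t) :
    {x : EuclideanSpace ℝ (Fin 2) | tau2 m0 m1 m2 x = t}.encard = 2 := by
  obtain ⟨ht₁, ht₂, ht₂₁⟩ := hint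
  subst hd10 hd20 hd21
  have hD : det2 u v ≠ 0 := fun h => hnc (collinear_of_det2_vsub_eq_zero (hu ▸ hv ▸ h))
  set A := ‖u‖ ^ 2 - t.1 ^ 2
  set B := ‖v‖ ^ 2 - t.2 ^ 2
  set C := ‖v - u‖ ^ 2 - (t.2 - t.1) ^ 2
  have ha' : a t = ‖t.2 • u - t.1 • v‖ ^ 2 - det2 u v ^ 2 := ha t
  have hb' : bbar t = ⟪t.2 • u - t.1 • v, B • u - A • v⟫ := hb t
  let Y : ℝ → ℝ² := fun r => cramer u v (A / 2 - r * t.1) (B / 2 - r * t.2)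
  have hfiber : {x | tau2 m0 m1 m2 x = t} = {x | x - m0 = Y ‖x - m0‖} := by
    ext x
    have hxu : x - m1 = x - m0 - u := by rw [hu, sub_sub_sub_cancel_right]
    have hxv : x - m2 = x - m0 - v := by rw [hv, sub_sub_sub_cancel_right]
    simp only [mem_ofPred_eq, tau2, Prod.ext_iff, hxu, hxv, norm_sub_sub_norm_eq_iff ht₁,
      norm_sub_sub_norm_eq_iff ht₂]
    exact inner_eq_and_inner_eq_iff_eq_cramer hD
  have hroots := setOf_norm_eq_self_eq_setOf_quadratic_eq_zero (f := Y) (pow_ne_zero 2 hD) hat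
    hbt (sq_nonneg _) fun r => by
      rw [ha', hb']
      exact det2_sq_mul_norm_sq_cramer_sub_sq hD t.1 t.2 A B r
  have hABC : 0 < A * B * C := by
    have hpos {s : ℝ} {w : ℝ²} (h : |s| < ‖w‖) : 0 < ‖w‖ ^ 2 - s ^ 2 :=
      sub_pos.2 (sq_lt_sq.2 (by rwa [abs_norm]))
    exact mul_pos (mul_pos (hpos ht₁) (hpos ht₂)) (hpos ht₂₁)
  rw [hfiber, encard_setOf_sub_eq_comp_norm_sub, hroots]
  refine encard_setOf_quadratic_eq_zero hat.ne' (mul_ne_zero hD (Real.sqrt_pos.2 hABC).ne') ?_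
  rw [ha', hb', discrim_tdoa, mul_mul_mul_comm, Real.mul_self_sqrt hABC.le, sq]
end

section
/- Assume m0, m1, m2 are not collinear. Let t = (t₁, t₂) ∈ ℝ² and suppose that either (a(t) > 0 and b̄(t) < 0), or (a(t) = 0 and b̄(t) ≤ 0). Then there is no x ∈ ℝ² with τ₂(x) = t. In particular the six tangency points ±T₀⁺, ±T₁⁺, ±T₂⁺ (where a = b̄ = 0) do not belong to the image of the TDOA map. -/
open Set
open scoped RealInnerProductSpace

theorem linearIndependent_vsub_of_not_collinear {k V : Type*} [Field k] [AddCommGroup V]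
    [Module k V] {m0 m1 m2 : V} (h : ¬ Collinear k ({m0, m1, m2} : Set V)) :
    LinearIndependent k ![m1 - m0, m2 - m0] := by
  have hai := affineIndependent_iff_not_collinear_set.2 h
  rw [affineIndependent_iff_linearIndependent_vsub k _ (0 : Fin 3),
    ← linearIndependent_equiv (finSuccAboveEquiv (0 : Fin 3))] at hai
  convert! hai using 1
  ext i
  fin_cases i <;> rfl

namespace Tdoa

noncomputable section InnerProductSpace

variable {E : Type*} [NormedAddCommGroup E] [InnerProductSpace ℝ E] (u v : E)

def centered (y : E) : ℝ × ℝ := (‖y - u‖ - ‖y‖, ‖y - v‖ - ‖y‖)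

def lin (t : ℝ × ℝ) : E := t.2 • u - t.1 • v

def quad (t : ℝ × ℝ) : E := (‖v‖ ^ 2 - t.2 ^ 2) • u - (‖u‖ ^ 2 - t.1 ^ 2) • v

def bbar (t : ℝ × ℝ) : ℝ := ⟪lin u v t, quad u v t⟫

def tangencyPoint (y : E) : ℝ × ℝ := (⟪u, y⟫ / ‖y‖, ⟪v, y⟫ / ‖y‖)

theorem two_smul_inner_smul_sub_inner_smul (y : E) :
    (2 : ℝ) • (⟪v, y⟫ • u - ⟪u, y⟫ • v)
      = quad u v (centered u v y) - (2 * ‖y‖) • lin u v (centered u v y) := by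
  have key (m : E) : 2 * ⟪m, y⟫ = ‖m‖ ^ 2 - (‖y - m‖ - ‖y‖) ^ 2 - 2 * ‖y‖ * (‖y - m‖ - ‖y‖) := by
    linear_combination norm_sub_sq_real y m - 2 * real_inner_comm m y
  simp only [centered, lin, quad]
  linear_combination (norm := module) key v • u - key u • v

theorem norm_lin_sq (t : ℝ × ℝ) :
    ‖lin u v t‖ ^ 2 = t.2 ^ 2 * ‖u‖ ^ 2 - 2 * (t.1 * t.2) * ⟪u, v⟫ + t.1 ^ 2 * ‖v‖ ^ 2 := by
  rw [lin, norm_sub_sq_real, norm_smul, norm_smul, real_inner_smul_left, real_inner_smul_right,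
    mul_pow, mul_pow, Real.norm_eq_abs, Real.norm_eq_abs, sq_abs, sq_abs]
  ring

theorem lin_neg (t : ℝ × ℝ) : lin u v (-t) = -lin u v t := by
  simp only [lin, Prod.fst_neg, Prod.snd_neg, neg_smul]
  abel

theorem quad_neg (t : ℝ × ℝ) : quad u v (-t) = quad u v t := by
  simp only [quad, Prod.fst_neg, Prod.snd_neg, neg_sq]

theorem bbar_neg (t : ℝ × ℝ) : bbar u v (-t) = -bbar u v t := by
  rw [bbar, bbar, lin_neg, quad_neg, inner_neg_left]

theorem lin_tangencyPoint (y : E) :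
    lin u v (tangencyPoint u v y) = ‖y‖⁻¹ • (⟪v, y⟫ • u - ⟪u, y⟫ • v) := by
  simp only [lin, tangencyPoint, smul_sub, smul_smul, div_eq_inv_mul]

theorem bbar_tangencyPoint {y : E} {k : ℝ} (h : quad u v (tangencyPoint u v y) = k • y) :
    bbar u v (tangencyPoint u v y) = 0 := by
  rw [bbar, h, lin_tangencyPoint, real_inner_smul_left, real_inner_smul_right, inner_sub_left,
    real_inner_smul_left, real_inner_smul_left, mul_comm ⟪v, y⟫, sub_self, mul_zero, mul_zero]

theorem inner_self_div_norm (x : E) : ⟪x, x⟫ / ‖x‖ = ‖x‖ := by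
  rw [real_inner_self_eq_norm_sq, sq, mul_self_div_self]

theorem quad_tangencyPoint_left :
    quad u v (tangencyPoint u v u) = (‖v‖ ^ 2 - (⟪v, u⟫ / ‖u‖) ^ 2) • u := by
  simp only [quad, tangencyPoint, inner_self_div_norm, sub_self, zero_smul, sub_zero]

theorem quad_tangencyPoint_right :
    quad u v (tangencyPoint u v v) = -(‖u‖ ^ 2 - (⟪u, v⟫ / ‖v‖) ^ 2) • v := by
  simp only [quad, tangencyPoint, inner_self_div_norm, sub_self, zero_smul, zero_sub, neg_smul]

theorem quad_tangencyPoint_sub (h : u ≠ v) :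
    quad u v (tangencyPoint u v (v - u)) = -(‖u‖ ^ 2 - (⟪u, v - u⟫ / ‖v - u‖) ^ 2) • (v - u) := by
  have hn : ‖v - u‖ ≠ 0 := norm_ne_zero_iff.2 (sub_ne_zero.2 h.symm)
  have hpq : ‖v‖ ^ 2 - (⟪v, v - u⟫ / ‖v - u‖) ^ 2 = ‖u‖ ^ 2 - (⟪u, v - u⟫ / ‖v - u‖) ^ 2 := by
    rw [div_pow, div_pow, ← real_inner_self_eq_norm_sq (v - u)]
    field_simp
    simp only [real_inner_self_eq_norm_sq, inner_sub_left, inner_sub_right, real_inner_comm u v]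
    ring
  rw [quad, tangencyPoint, hpq, ← smul_sub, neg_smul, ← smul_neg, neg_sub]

end InnerProductSpace

noncomputable section Plane

variable (u v : EuclideanSpace ℝ (Fin 2))

def cross : ℝ := u 0 * v 1 - u 1 * v 0

def a (t : ℝ × ℝ) : ℝ := ‖lin u v t‖ ^ 2 - cross u v ^ 2

theorem inner_eq_fin_two (x y : EuclideanSpace ℝ (Fin 2)) : ⟪x, y⟫ = x 0 * y 0 + x 1 * y 1 := by
  simp only [PiLp.inner_apply, Fin.sum_univ_two, RCLike.inner_apply, conj_trivial]
  ring

theorem norm_inner_smul_sub_inner_smul_sq (y : EuclideanSpace ℝ (Fin 2)) :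
    ‖⟪v, y⟫ • u - ⟪u, y⟫ • v‖ ^ 2 = ‖y‖ ^ 2 * cross u v ^ 2 := by
  simp only [EuclideanSpace.real_norm_sq_eq, Fin.sum_univ_two, inner_eq_fin_two, cross,
    PiLp.sub_apply, PiLp.smul_apply, smul_eq_mul]
  ring

theorem cross_sq : cross u v ^ 2 = ‖u‖ ^ 2 * ‖v‖ ^ 2 - ⟪u, v⟫ ^ 2 := by
  simp only [EuclideanSpace.real_norm_sq_eq, Fin.sum_univ_two, inner_eq_fin_two, cross]
  ring

theorem cross_ne_zero_of_linearIndependent (h : LinearIndependent ℝ ![u, v]) : cross u v ≠ 0 := by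
  have h' := h.map' (WithLp.linearEquiv 2 ℝ (Fin 2 → ℝ)).toLinearMap (LinearEquiv.ker _)
  have hrows : (Matrix.of ![⇑u, ⇑v]).row =
      (WithLp.linearEquiv 2 ℝ (Fin 2 → ℝ)).toLinearMap ∘ ![u, v] := by
    ext i j
    fin_cases i <;> rfl
  rw [← hrows, Matrix.linearIndependent_rows_iff_isUnit, Matrix.isUnit_iff_isUnit_det,
    Matrix.det_fin_two] at h'
  simpa [cross] using h'.ne_zero

theorem quadratic_identity (y : EuclideanSpace ℝ (Fin 2)) :
    4 * a u v (centered u v y) * ‖y‖ ^ 2 - 4 * bbar u v (centered u v y) * ‖y‖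
      + ‖quad u v (centered u v y)‖ ^ 2 = 0 := by
  have h := congrArg (‖·‖ ^ 2) (two_smul_inner_smul_sub_inner_smul u v y)
  rw [norm_smul, mul_pow, norm_inner_smul_sub_inner_smul_sq, norm_sub_sq_real, norm_smul, mul_pow,
    real_inner_smul_right, real_inner_comm, Real.norm_eq_abs, Real.norm_eq_abs, sq_abs, sq_abs] at h
  rw [a, bbar]
  linear_combination -h

theorem a_neg (t : ℝ × ℝ) : a u v (-t) = a u v t := by
  rw [a, a, lin_neg, norm_neg]

theorem quad_eq_zero_of_nonneg_of_nonpos {y : EuclideanSpace ℝ (Fin 2)}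
    (ha : 0 ≤ a u v (centered u v y)) (hb : bbar u v (centered u v y) ≤ 0) :
    quad u v (centered u v y) = 0 := by
  have h := quadratic_identity u v y
  have hy := norm_nonneg y
  have : ‖quad u v (centered u v y)‖ ^ 2 ≤ 0 := by
    nlinarith [mul_nonneg ha (sq_nonneg ‖y‖), mul_nonpos_of_nonpos_of_nonneg hb hy]
  exact norm_eq_zero.1 (pow_eq_zero_iff two_ne_zero |>.1 (le_antisymm this (sq_nonneg _)))

theorem a_pos_of_quad_eq_zero (hli : LinearIndependent ℝ ![u, v]) {t : ℝ × ℝ}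
    (hq : quad u v t = 0) : 0 < a u v t := by
  obtain ⟨hv, hu⟩ := LinearIndependent.pair_iff.1 hli (‖v‖ ^ 2 - t.2 ^ 2) (-(‖u‖ ^ 2 - t.1 ^ 2))
    (by rw [← hq, quad, neg_smul, ← sub_eq_add_neg])
  have hcross := cross_ne_zero_of_linearIndependent u v hli
  have ha : a u v t = (t.1 * t.2 - ⟪u, v⟫) ^ 2 := by
    rw [a, norm_lin_sq, cross_sq]
    linear_combination (‖v‖ ^ 2 - t.2 ^ 2) * hu
  have hcross_sq : cross u v ^ 2 = (t.1 * t.2 - ⟪u, v⟫) * (t.1 * t.2 + ⟪u, v⟫) := by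
    rw [cross_sq]
    linear_combination (- ‖v‖ ^ 2) * hu + (t.1 ^ 2) * hv
  rw [ha]
  have : t.1 * t.2 - ⟪u, v⟫ ≠ 0 := fun h => hcross (by simpa [h] using hcross_sq)
  exact pow_two_pos_of_ne_zero this

theorem a_pos_and_bbar_eq_zero_of_mem_range (hli : LinearIndependent ℝ ![u, v]) {t : ℝ × ℝ}
    (ht : t ∈ range (centered u v)) (ha : 0 ≤ a u v t) (hb : bbar u v t ≤ 0) :
    0 < a u v t ∧ bbar u v t = 0 := by
  obtain ⟨y, rfl⟩ := ht
  have hq := quad_eq_zero_of_nonneg_of_nonpos u v ha hb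
  exact ⟨a_pos_of_quad_eq_zero u v hli hq, by rw [bbar, hq, inner_zero_right]⟩

theorem a_tangencyPoint {y : EuclideanSpace ℝ (Fin 2)} (hy : y ≠ 0) :
    a u v (tangencyPoint u v y) = 0 := by
  rw [a, lin_tangencyPoint, norm_smul, mul_pow, norm_inner_smul_sub_inner_smul_sq, norm_inv,
    norm_norm, inv_pow, inv_mul_cancel_left₀ (pow_ne_zero 2 (norm_ne_zero_iff.2 hy)), sub_self]

theorem smul_tangencyPoint_not_mem_range (hli : LinearIndependent ℝ ![u, v])
    {y : EuclideanSpace ℝ (Fin 2)} (hy : y ≠ 0) {k : ℝ}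
    (hq : quad u v (tangencyPoint u v y) = k • y) {ε : ℝ} (hε : ε = 1 ∨ ε = -1) :
    ε • tangencyPoint u v y ∉ range (centered u v) := by
  have ha := a_tangencyPoint u v hy
  have hb := bbar_tangencyPoint u v hq
  have hε' : a u v (ε • tangencyPoint u v y) = 0 ∧ bbar u v (ε • tangencyPoint u v y) = 0 := by
    rcases hε with rfl | rfl <;> simp [a_neg, bbar_neg, ha, hb]
  exact fun hmem => (a_pos_and_bbar_eq_zero_of_mem_range u v hli hmem hε'.1.ge hε'.2.le).1.ne' hε'.1

end Plane

end Tdoa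

theorem range_tau2 (m0 m1 m2 : EuclideanSpace ℝ (Fin 2)) :
    range (tau2 m0 m1 m2) = range (Tdoa.centered (m1 - m0) (m2 - m0)) := by
  rw [← (Equiv.subRight m0).surjective.range_comp (Tdoa.centered (m1 - m0) (m2 - m0))]
  congr 1
  funext x
  simp [tau2, Tdoa.centered]

theorem stmt15 (m0 m1 m2 : EuclideanSpace ℝ (Fin 2))
    (hnc : ¬ Collinear ℝ ({m0, m1, m2} : Set (EuclideanSpace ℝ (Fin 2))))
    (u v : EuclideanSpace ℝ (Fin 2)) (hu : u = m1 - m0) (hv : v = m2 - m0)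
    (d10 d20 d21 : ℝ) (hd10 : d10 = ‖u‖) (hd20 : d20 = ‖v‖) (hd21 : d21 = ‖v - u‖)
    (a : ℝ × ℝ → ℝ)
    (ha : ∀ t : ℝ × ℝ, a t = ‖t.2 • u - t.1 • v‖ ^ 2 - (u 0 * v 1 - u 1 * v 0) ^ 2)
    (bbar : ℝ × ℝ → ℝ)
    (hb : ∀ t : ℝ × ℝ,
      bbar t = (inner ℝ (t.2 • u - t.1 • v)
        ((d20 ^ 2 - t.2 ^ 2) • u - (d10 ^ 2 - t.1 ^ 2) • v) : ℝ))
    (T2p T1p T0p : ℝ × ℝ)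
    (hT2 : T2p = (d10, (inner ℝ v u : ℝ) / d10))
    (hT1 : T1p = ((inner ℝ u v : ℝ) / d20, d20))
    (hT0 : T0p = ((inner ℝ u (v - u) : ℝ) / d21, (inner ℝ v (v - u) : ℝ) / d21)) :
    (∀ t : ℝ × ℝ, (0 < a t ∧ bbar t < 0) ∨ (a t = 0 ∧ bbar t ≤ 0) →
      ¬ ∃ x : EuclideanSpace ℝ (Fin 2), tau2 m0 m1 m2 x = t) ∧
    (∀ ε : ℝ, ε = 1 ∨ ε = -1 →
      ε • T0p ∉ Set.range (tau2 m0 m1 m2) ∧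
      ε • T1p ∉ Set.range (tau2 m0 m1 m2) ∧
      ε • T2p ∉ Set.range (tau2 m0 m1 m2)) := by
  subst hd10 hd20 hd21
  obtain rfl : a = Tdoa.a u v := funext ha
  obtain rfl : bbar = Tdoa.bbar u v := funext hb
  have hli : LinearIndependent ℝ ![u, v] := hu ▸ hv ▸ linearIndependent_vsub_of_not_collinear hnc
  have hrange : range (tau2 m0 m1 m2) = range (Tdoa.centered u v) :=
    hu ▸ hv ▸ range_tau2 m0 m1 m2
  have hT0' : T0p = Tdoa.tangencyPoint u v (v - u) := hT0
  have hT1' : T1p = Tdoa.tangencyPoint u v v := by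
    rw [hT1, Tdoa.tangencyPoint, Tdoa.inner_self_div_norm]
  have hT2' : T2p = Tdoa.tangencyPoint u v u := by
    rw [hT2, Tdoa.tangencyPoint, Tdoa.inner_self_div_norm]
  simp only [← mem_range, hrange, hT0', hT1', hT2']
  refine ⟨fun t ht hmem => ?_, fun ε hε => ⟨?_, ?_, ?_⟩⟩
  · have := Tdoa.a_pos_and_bbar_eq_zero_of_mem_range u v hli hmem
    rcases ht with ⟨ha, hb⟩ | ⟨ha, hb⟩
    · exact hb.ne (this ha.le hb.le).2
    · exact (this ha.ge hb).1.ne' ha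
  · have hne : u ≠ v := hli.injective.ne zero_ne_one
    exact Tdoa.smul_tangencyPoint_not_mem_range u v hli (sub_ne_zero.2 hne.symm)
      (Tdoa.quad_tangencyPoint_sub u v hne) hε
  · exact Tdoa.smul_tangencyPoint_not_mem_range u v hli (hli.ne_zero 1)
      (Tdoa.quad_tangencyPoint_right u v) hε
  · exact Tdoa.smul_tangencyPoint_not_mem_range u v hli (hli.ne_zero 0)
      (Tdoa.quad_tangencyPoint_left u v) hε
end

section
/- Assume m1 ≠ m0 and m2 − m0 = k·(m1 − m0) for some real k ∉ {0, 1}, and let d10 = ‖m1 − m0‖. Let t = (t₁, t₂) ∈ ℝ² with t₂ = k·t₁. In ℝ³ define the Minkowski bilinear form η((u₁,u₂,u₃),(w₁,w₂,w₃)) = u₁w₁ + u₂w₂ − u₃w₃, set M₀ = (m0, 0), M_i(t) = (m_i, t_i) for i = 1,2, D_i = M_i(t) − M₀, and Π_i(t) = {X ∈ ℝ³ : η(D_i, X − M₀) = ½·η(D_i, D_i)}. Then: if t₁² ≠ d10², then Π₁(t) ∩ Π₂(t) = ∅; and if t₁² = d10², then Π₁(t) = Π₂(t) and M₀ ∈ Π₁(t).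 -/
/-!
Collinearity makes `D₂ = k • D₁`, so `Π₂` is the level set of the same affine functional
`η(D₁, · - M₀)` as `Π₁`, at level `k · η(D₁, D₁)/2` instead of `η(D₁, D₁)/2`. Since `k ∉ {0, 1}`
the two levels agree exactly when `D₁` is lightlike, `η(D₁, D₁) = d₁₀² - t₁² = 0`; otherwise the
planes are parallel and distinct.
-/

open RealInnerProductSpace

section BisectorPlane

variable {V : Type*} [AddCommGroup V] [Module ℝ V] (B : LinearMap.BilinForm ℝ V) (M D : V)
  {k : ℝ}

def bisectorPlane : Set V :=
  {X | B D (X - M) = B D D / 2}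

theorem mem_bisectorPlane_smul_iff (hk : k ≠ 0) {X : V} :
    X ∈ bisectorPlane B M (k • D) ↔ B D (X - M) = k * (B D D / 2) := by
  simp only [bisectorPlane, Set.mem_ofPred_eq, map_smul, LinearMap.smul_apply, smul_eq_mul]
  rw [mul_div_assoc, mul_right_inj' hk, mul_div_assoc]

theorem self_mem_bisectorPlane (hD : B D D = 0) : M ∈ bisectorPlane B M D := by
  simp [bisectorPlane, hD]

theorem bisectorPlane_smul_of_self_eq_zero (hD : B D D = 0) (hk : k ≠ 0) :
    bisectorPlane B M (k • D) = bisectorPlane B M D := by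
  ext X
  rw [mem_bisectorPlane_smul_iff B M D hk]
  simp [bisectorPlane, hD]

theorem disjoint_bisectorPlane_smul (hD : B D D ≠ 0) (hk0 : k ≠ 0) (hk1 : k ≠ 1) :
    Disjoint (bisectorPlane B M D) (bisectorPlane B M (k • D)) := by
  refine Set.disjoint_left.2 fun X h1 h2 => hk1 ?_
  rw [mem_bisectorPlane_smul_iff B M D hk0, h1, eq_comm] at h2
  exact (mul_eq_right₀ (div_ne_zero hD two_ne_zero)).1 h2

end BisectorPlane

section Minkowski

variable (E : Type*) [NormedAddCommGroup E] [InnerProductSpace ℝ E]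

noncomputable def minkowskiForm : LinearMap.BilinForm ℝ (E × ℝ) :=
  (innerₗ E).compl₁₂ (LinearMap.fst ℝ E ℝ) (LinearMap.fst ℝ E ℝ) -
    (LinearMap.mul ℝ ℝ).compl₁₂ (LinearMap.snd ℝ E ℝ) (LinearMap.snd ℝ E ℝ)

variable {E}

@[simp]
theorem minkowskiForm_apply (p q : E × ℝ) : minkowskiForm E p q = ⟪p.1, q.1⟫ - p.2 * q.2 := rfl

theorem minkowskiForm_self (v : E) (t : ℝ) : minkowskiForm E (v, t) (v, t) = ‖v‖ ^ 2 - t ^ 2 := by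
  rw [minkowskiForm_apply, real_inner_self_eq_norm_sq, sq t]

end Minkowski

theorem stmt17_general (m0 m1 m2 : EuclideanSpace ℝ (Fin 2)) (k : ℝ)
    (hk0 : k ≠ 0) (hk1 : k ≠ 1)
    (hcol : m2 - m0 = k • (m1 - m0))
    (d10 : ℝ) (hd10 : d10 = ‖m1 - m0‖)
    (t1 t2 : ℝ) (ht : t2 = k * t1)
    (eta : (EuclideanSpace ℝ (Fin 2) × ℝ) → (EuclideanSpace ℝ (Fin 2) × ℝ) → ℝ)
    (heta : ∀ p q : EuclideanSpace ℝ (Fin 2) × ℝ, eta p q = (inner ℝ p.1 q.1 : ℝ) - p.2 * q.2)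
    (Pi1 Pi2 : Set (EuclideanSpace ℝ (Fin 2) × ℝ))
    (hPi1 : Pi1 = {X : EuclideanSpace ℝ (Fin 2) × ℝ |
      eta (m1 - m0, t1) (X - (m0, 0)) = eta (m1 - m0, t1) (m1 - m0, t1) / 2})
    (hPi2 : Pi2 = {X : EuclideanSpace ℝ (Fin 2) × ℝ |
      eta (m2 - m0, t2) (X - (m0, 0)) = eta (m2 - m0, t2) (m2 - m0, t2) / 2}) :
    (t1 ^ 2 ≠ d10 ^ 2 → Pi1 ∩ Pi2 = ∅) ∧
    (t1 ^ 2 = d10 ^ 2 → Pi1 = Pi2 ∧ ((m0, 0) : EuclideanSpace ℝ (Fin 2) × ℝ) ∈ Pi1) := by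
  set B := minkowskiForm (EuclideanSpace ℝ (Fin 2))
  set D := (m1 - m0, t1)
  obtain rfl : eta = fun p q => B p q := funext₂ heta
  have hD2 : (m2 - m0, t2) = k • D := by rw [hcol, ht]; rfl
  obtain rfl : Pi1 = bisectorPlane B (m0, 0) D := hPi1
  obtain rfl : Pi2 = bisectorPlane B (m0, 0) (k • D) := by rw [hPi2, hD2]; rfl
  have hDD : B D D = d10 ^ 2 - t1 ^ 2 := by rw [minkowskiForm_self, hd10]
  refine ⟨fun ht1 => ?_, fun ht1 => ?_⟩
  · have hD : B D D ≠ 0 := by rw [hDD]; exact sub_ne_zero.2 (Ne.symm ht1)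
    exact (disjoint_bisectorPlane_smul B _ D hD hk0 hk1).inter_eq
  · have hD : B D D = 0 := by rw [hDD, ht1, sub_self]
    exact ⟨(bisectorPlane_smul_of_self_eq_zero B _ D hD hk0).symm, self_mem_bisectorPlane B _ D hD⟩

theorem stmt17 (m0 m1 m2 : EuclideanSpace ℝ (Fin 2)) (k : ℝ)
    (hk0 : k ≠ 0) (hk1 : k ≠ 1) (hne : m1 ≠ m0)
    (hcol : m2 - m0 = k • (m1 - m0))
    (d10 : ℝ) (hd10 : d10 = ‖m1 - m0‖)
    (t1 t2 : ℝ) (ht : t2 = k * t1)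
    (eta : (EuclideanSpace ℝ (Fin 2) × ℝ) → (EuclideanSpace ℝ (Fin 2) × ℝ) → ℝ)
    (heta : ∀ p q : EuclideanSpace ℝ (Fin 2) × ℝ, eta p q = (inner ℝ p.1 q.1 : ℝ) - p.2 * q.2)
    (Pi1 Pi2 : Set (EuclideanSpace ℝ (Fin 2) × ℝ))
    (hPi1 : Pi1 = {X : EuclideanSpace ℝ (Fin 2) × ℝ |
      eta (m1 - m0, t1) (X - (m0, 0)) = eta (m1 - m0, t1) (m1 - m0, t1) / 2})
    (hPi2 : Pi2 = {X : EuclideanSpace ℝ (Fin 2) × ℝ |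
      eta (m2 - m0, t2) (X - (m0, 0)) = eta (m2 - m0, t2) (m2 - m0, t2) / 2}) :
    (t1 ^ 2 ≠ d10 ^ 2 → Pi1 ∩ Pi2 = ∅) ∧
    (t1 ^ 2 = d10 ^ 2 → Pi1 = Pi2 ∧ ((m0, 0) : EuclideanSpace ℝ (Fin 2) × ℝ) ∈ Pi1) :=
  stmt17_general m0 m1 m2 k hk0 hk1 hcol d10 hd10 t1 t2 ht eta heta Pi1 Pi2 hPi1 hPi2
end

section
/- Assume m1 ≠ m0 and m2 − m0 = k·(m1 − m0) for some real k ∉ {0, 1}; let σ = sign(k), d10 = ‖m1 − m0‖, d20 = ‖m2 − m0‖, let r be the affine line through m0 and m1, let r⁰ be the smallest closed segment of r containing m0, m1, m2, and let int(r⁰) denote the corresponding open segment. Then for x ∈ ℝ²: τ₂(x) = (d10, σ·d20) if and only if x ∈ r, x ∉ int(r⁰), and ⟨x − m0, m1 − m0⟩ ≤ 0; and τ₂(x) = (−d10, −σ·d20) if and only if x ∈ r, x ∉ int(r⁰), and ⟨x − m0, m1 − m0⟩ > 0. -/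
/-!
Parametrize the line `r` by `t ↦ lineMap m0 m1 t`, so that `m0, m1, m2` sit at `0, 1, k`.
The first coordinate of `τ₂ x` equals `±d10` only when the triangle inequality for `x, m0, m1`
is an equality, which forces `x ∈ r`. On `r`, with `d = d10`,
`τ₂ = ((|t - 1| - |t|) d, (|t - k| - |t|) d)` and `σ d20 = k d`, so the two values are attained
exactly for `t ≤ min 0 k` and for `t ≥ max 1 k`. Finally `r⁰` is the image of
`[min 0 k, max 1 k]`, its intrinsic interior that of the open interval, and
`⟪x - m0, m1 - m0⟫ = t d²` has the sign of `t`.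
-/

open Set AffineMap

section AbsSub

variable {c t : ℝ}

theorem abs_sub_sub_abs_eq_self_iff_of_nonpos (ht : t ≤ 0) : |t - c| - |t| = c ↔ t ≤ c := by
  rcases abs_cases (t - c) with ⟨h, _⟩ | ⟨h, _⟩ <;> rw [abs_of_nonpos ht, h] <;>
    constructor <;> intro <;> linarith

theorem abs_sub_sub_abs_eq_neg_iff_of_nonneg (ht : 0 ≤ t) : |t - c| - |t| = -c ↔ c ≤ t := by
  rcases abs_cases (t - c) with ⟨h, _⟩ | ⟨h, _⟩ <;> rw [abs_of_nonneg ht, h] <;>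
    constructor <;> intro <;> linarith

theorem abs_sub_sub_abs_eq_self_iff_of_pos (hc : 0 < c) : |t - c| - |t| = c ↔ t ≤ 0 := by
  rcases abs_cases t with ⟨h, _⟩ | ⟨h, _⟩ <;> rcases abs_cases (t - c) with ⟨h', _⟩ | ⟨h', _⟩ <;>
    rw [h, h'] <;> constructor <;> intro <;> linarith

theorem abs_sub_sub_abs_eq_neg_iff_of_pos (hc : 0 < c) : |t - c| - |t| = -c ↔ c ≤ t := by
  rcases abs_cases t with ⟨h, _⟩ | ⟨h, _⟩ <;> rcases abs_cases (t - c) with ⟨h', _⟩ | ⟨h', _⟩ <;>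
    rw [h, h'] <;> constructor <;> intro <;> linarith

end AbsSub

theorem Real.sign_mul_abs (x : ℝ) : Real.sign x * |x| = x := by
  rcases lt_trichotomy x 0 with h | rfl | h
  · rw [Real.sign_of_neg h, abs_of_neg h]; ring
  · simp
  · rw [Real.sign_of_pos h, abs_of_pos h]; ring

theorem convexHull_zero_one_eq_Icc (k : ℝ) :
    convexHull ℝ {0, 1, k} = Icc (min 0 k) (max 1 k) := by
  refine (convexHull_min ?_ (convex_Icc _ _)).antisymm ?_
  · rintro x (rfl | rfl | rfl) <;> simp
  · rw [← segment_eq_Icc (by simp)]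
    refine segment_subset_convexHull ?_ ?_
    · rcases min_choice 0 k with h | h <;> simp [h]
    · rcases max_choice 1 k with h | h <;> simp [h]

theorem intrinsicInterior_eq_interior_of_affineSpan_eq_top {𝕜 V P : Type*} [Ring 𝕜]
    [AddCommGroup V] [Module 𝕜 V] [TopologicalSpace P] [AddTorsor V P] {s : Set P}
    (h : affineSpan 𝕜 s = ⊤) : intrinsicInterior 𝕜 s = interior s := by
  have hopen : IsOpen (affineSpan 𝕜 s : Set P) := by simp [h]
  exact (hopen.isOpenMap_subtype_val.image_interior_subset _).trans
    (interior_mono (image_preimage_subset _ _)) |>.antisymm interior_subset_intrinsicInterior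

theorem intrinsicInterior_Icc {a b : ℝ} (hab : a < b) :
    intrinsicInterior ℝ (Icc a b) = Ioo a b := by
  rw [intrinsicInterior_eq_interior_of_affineSpan_eq_top, interior_Icc]
  exact affineSpan_eq_top_of_nonempty_interior (by simpa [(convex_Icc a b).convexHull_eq])

section LineMap

variable {V : Type*} [NormedAddCommGroup V] [NormedSpace ℝ V]

theorem intrinsicInterior_image_lineMap {p q : V} (hpq : p ≠ q) (s : Set ℝ) :
    intrinsicInterior ℝ (lineMap p q '' s) = lineMap p q '' intrinsicInterior ℝ s := by
  have hd : ‖q - p‖ ≠ 0 := norm_ne_zero_iff.2 (sub_ne_zero.2 hpq.symm)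
  have hu : ‖‖q - p‖⁻¹ • (q - p)‖ = 1 := by simp [norm_smul, hd]
  -- `lineMap p q` is the dilation by `‖q - p‖` followed by an isometric parametrization
  let φ : ℝ →ᵃⁱ[ℝ] V := (AffineIsometryEquiv.vaddConst ℝ p).toAffineIsometry.comp
    (LinearIsometry.toSpanSingleton ℝ V hu).toAffineIsometry
  let ψ : ℝ ≃ᵃ[ℝ] ℝ := (LinearEquiv.smulOfNeZero ℝ ℝ _ hd).toAffineEquiv
  have h : ⇑(lineMap p q : ℝ →ᵃ[ℝ] V) = φ ∘ ψ := by
    ext t; simp [φ, ψ, lineMap_apply_module', smul_smul, mul_right_comm _ t, hd]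
  rw [h, image_comp, image_comp, φ.intrinsicInterior_image, ψ.intrinsicInterior_image]

theorem lineMap_mem_intrinsicInterior_convexHull_iff {p q : V} (hpq : p ≠ q) (k t : ℝ) :
    lineMap p q t ∈ intrinsicInterior ℝ (convexHull ℝ {p, q, lineMap p q k}) ↔
      min 0 k < t ∧ t < max 1 k := by
  have hhull : convexHull ℝ {p, q, lineMap p q k} = lineMap p q '' convexHull ℝ {0, 1, k} := by
    rw [AffineMap.image_convexHull]
    simp [image_insert_eq]
  have hlt : min 0 k < max 1 k :=
    (min_le_left 0 k).trans_lt (zero_lt_one.trans_le (le_max_left 1 k))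
  rw [hhull, intrinsicInterior_image_lineMap hpq, convexHull_zero_one_eq_Icc,
    intrinsicInterior_Icc hlt, (lineMap_injective ℝ hpq).mem_set_image, mem_Ioo]

theorem mem_affineSpan_pair_of_abs_dist_sub_dist_eq [StrictConvexSpace ℝ V] {p q x : V}
    (hpq : p ≠ q) (h : |dist x q - dist x p| = dist p q) : x ∈ line[ℝ, p, q] := by
  rcases abs_eq_abs.1 (h.trans (abs_of_nonneg dist_nonneg).symm) with h | h
  · rw [Set.pair_comm]
    exact (dist_add_dist_eq_iff.1 (by linarith)).left_mem_affineSpan_of_right_ne hpq.symm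
  · refine (dist_add_dist_eq_iff.1 ?_).left_mem_affineSpan_of_right_ne hpq
    rw [dist_comm q p]
    linarith

end LineMap

theorem inner_lineMap_sub_left {W : Type*} [NormedAddCommGroup W] [InnerProductSpace ℝ W]
    (p q : W) (t : ℝ) : inner ℝ (lineMap p q t - p) (q - p) = t * ‖q - p‖ ^ 2 := by
  rw [← vsub_eq_sub, lineMap_vsub_left, vsub_eq_sub, real_inner_smul_left,
    real_inner_self_eq_norm_sq]

theorem tau2_lineMap (m0 m1 : EuclideanSpace ℝ (Fin 2)) (k t : ℝ) :
    tau2 m0 m1 (lineMap m0 m1 k) (lineMap m0 m1 t) =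
      ((|t - 1| - |t|) * dist m0 m1, (|t - k| - |t|) * dist m0 m1) := by
  have h (c : ℝ) : ‖lineMap m0 m1 t - lineMap m0 m1 c‖ = |t - c| * dist m0 m1 := by
    rw [← dist_eq_norm, dist_lineMap_lineMap, Real.dist_eq]
  have h0 := h 0
  have h1 := h 1
  simp only [lineMap_apply_zero, lineMap_apply_one, sub_zero] at h0 h1
  simp only [tau2, h, h0, h1, sub_mul]

section Tau2

variable {m0 m1 : EuclideanSpace ℝ (Fin 2)} {k t : ℝ}

theorem tau2_lineMap_eq_iff (hne : m1 ≠ m0) :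
    tau2 m0 m1 (lineMap m0 m1 k) (lineMap m0 m1 t) = (dist m0 m1, k * dist m0 m1) ↔
      t ≤ 0 ∧ t ≤ k := by
  have hd : dist m0 m1 ≠ 0 := dist_ne_zero.2 hne.symm
  rw [tau2_lineMap, Prod.mk.injEq, mul_eq_right₀ hd, mul_left_inj' hd,
    abs_sub_sub_abs_eq_self_iff_of_pos one_pos]
  exact and_congr_right abs_sub_sub_abs_eq_self_iff_of_nonpos

theorem tau2_lineMap_eq_neg_iff (hne : m1 ≠ m0) :
    tau2 m0 m1 (lineMap m0 m1 k) (lineMap m0 m1 t) = (-dist m0 m1, -(k * dist m0 m1)) ↔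
      1 ≤ t ∧ k ≤ t := by
  have hd : dist m0 m1 ≠ 0 := dist_ne_zero.2 hne.symm
  rw [tau2_lineMap, ← neg_mul, ← neg_one_mul (dist m0 m1), Prod.mk.injEq, mul_left_inj' hd,
    mul_left_inj' hd, abs_sub_sub_abs_eq_neg_iff_of_pos one_pos]
  exact and_congr_right fun ht => abs_sub_sub_abs_eq_neg_iff_of_nonneg (zero_le_one.trans ht)

theorem mem_affineSpan_pair_of_abs_tau2_fst_eq {m2 x : EuclideanSpace ℝ (Fin 2)}
    (hne : m1 ≠ m0) (h : |(tau2 m0 m1 m2 x).1| = dist m0 m1) : x ∈ line[ℝ, m0, m1] :=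
  mem_affineSpan_pair_of_abs_dist_sub_dist_eq hne.symm (by simpa [tau2, dist_eq_norm] using h)

end Tau2

theorem stmt18_general (m0 m1 m2 : EuclideanSpace ℝ (Fin 2)) (k : ℝ)
    (hne : m1 ≠ m0)
    (hcol : m2 - m0 = k • (m1 - m0))
    (d10 d20 : ℝ) (hd10 : d10 = ‖m1 - m0‖) (hd20 : d20 = ‖m2 - m0‖)
    (σ : ℝ) (hσ : σ = Real.sign k)
    (r : AffineSubspace ℝ (EuclideanSpace ℝ (Fin 2)))
    (hr : r = affineSpan ℝ ({m0, m1} : Set (EuclideanSpace ℝ (Fin 2))))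
    (intr0 : Set (EuclideanSpace ℝ (Fin 2)))
    (hintr0 : intr0 =
      intrinsicInterior ℝ (convexHull ℝ ({m0, m1, m2} : Set (EuclideanSpace ℝ (Fin 2)))))
    (x : EuclideanSpace ℝ (Fin 2)) :
    (tau2 m0 m1 m2 x = (d10, σ * d20) ↔
      x ∈ (r : Set (EuclideanSpace ℝ (Fin 2))) ∧ x ∉ intr0 ∧
        (inner ℝ (x - m0) (m1 - m0) : ℝ) ≤ 0) ∧
    (tau2 m0 m1 m2 x = (-d10, -(σ * d20)) ↔
      x ∈ (r : Set (EuclideanSpace ℝ (Fin 2))) ∧ x ∉ intr0 ∧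
        0 < (inner ℝ (x - m0) (m1 - m0) : ℝ)) := by
  have hm2 : m2 = lineMap m0 m1 k := by rw [lineMap_apply_module', ← hcol, sub_add_cancel]
  have hd10' : ‖m1 - m0‖ = dist m0 m1 := by rw [dist_comm, dist_eq_norm]
  have hσd20 : σ * d20 = k * dist m0 m1 := by
    rw [hσ, hd20, hcol, norm_smul, Real.norm_eq_abs, ← mul_assoc, Real.sign_mul_abs, hd10']
  subst hm2 hr hintr0 hd10
  rw [hd10', hσd20]
  by_cases hx : x ∈ line[ℝ, m0, m1]
  · obtain ⟨t, rfl⟩ := mem_affineSpan_pair_iff_exists_lineMap_eq.1 hx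
    have hv : 0 < ‖m1 - m0‖ ^ 2 := pow_pos (norm_pos_iff.2 (sub_ne_zero.2 hne)) 2
    rw [tau2_lineMap_eq_iff hne, tau2_lineMap_eq_neg_iff hne,
      lineMap_mem_intrinsicInterior_convexHull_iff hne.symm, inner_lineMap_sub_left,
      ← not_lt (b := t * _), mul_pos_iff_of_pos_right hv]
    simp only [SetLike.mem_coe, hx, true_and, not_and_or, not_lt, le_min_iff, max_le_iff]
    grind
  · refine ⟨iff_of_false (fun h => hx ?_) (fun h => hx h.1),
      iff_of_false (fun h => hx ?_) (fun h => hx h.1)⟩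
    · exact mem_affineSpan_pair_of_abs_tau2_fst_eq hne (by rw [h, abs_dist])
    · exact mem_affineSpan_pair_of_abs_tau2_fst_eq hne (by rw [h, abs_neg, abs_dist])

theorem stmt18 (m0 m1 m2 : EuclideanSpace ℝ (Fin 2)) (k : ℝ)
    (hk0 : k ≠ 0) (hk1 : k ≠ 1) (hne : m1 ≠ m0)
    (hcol : m2 - m0 = k • (m1 - m0))
    (d10 d20 : ℝ) (hd10 : d10 = ‖m1 - m0‖) (hd20 : d20 = ‖m2 - m0‖)
    (σ : ℝ) (hσ : σ = Real.sign k)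
    (r : AffineSubspace ℝ (EuclideanSpace ℝ (Fin 2)))
    (hr : r = affineSpan ℝ ({m0, m1} : Set (EuclideanSpace ℝ (Fin 2))))
    (intr0 : Set (EuclideanSpace ℝ (Fin 2)))
    (hintr0 : intr0 =
      intrinsicInterior ℝ (convexHull ℝ ({m0, m1, m2} : Set (EuclideanSpace ℝ (Fin 2)))))
    (x : EuclideanSpace ℝ (Fin 2)) :
    (tau2 m0 m1 m2 x = (d10, σ * d20) ↔
      x ∈ (r : Set (EuclideanSpace ℝ (Fin 2))) ∧ x ∉ intr0 ∧
        (inner ℝ (x - m0) (m1 - m0) : ℝ) ≤ 0) ∧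
    (tau2 m0 m1 m2 x = (-d10, -(σ * d20)) ↔
      x ∈ (r : Set (EuclideanSpace ℝ (Fin 2))) ∧ x ∉ intr0 ∧
        0 < (inner ℝ (x - m0) (m1 - m0) : ℝ)) :=
  stmt18_general m0 m1 m2 k hne hcol d10 d20 hd10 hd20 σ hσ r hr intr0 hintr0 x
end
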